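/- arXiv:1112.6159 — 6 statements merged into one kernel-verified Lean document; each statement's English description precedes it below -/
import Mathlib

section
/- Let φ ∈ C¹(ℝ²) with ∫_{ℝ²} e^{-φ(ξ)} dξ < ∞, and let σ > 0. Then for every smooth function f : ℝ² × ℝ → ℝ that is compactly supported in the ξ-variable and 2π-periodic in the α-variable, one has ∫_{ℝ²} ∫_0^{2π} (L_φ f)(ξ, α) e^{-φ(ξ)} dα dξ = 0. (This is the infinitesimal invariance of the measure μ(dξ, dα) = N^{-1} e^{-φ(ξ)} dξ dα for the fiber lay-down generator.) -/
open MeasureTheory Real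

/-- The fiber lay-down generator `L_φ` acting on functions `f(ξ₁, ξ₂, α)`:
`L_φ f = (σ²/2) ∂²_α f + cos α ∂_{ξ₁} f + sin α ∂_{ξ₂} f − (∇φ(ξ)·τ(α)^⊥) ∂_α f`,
where `τ(α)^⊥ = (−sin α, cos α)`. -/
noncomputable def fiberGen (σ : ℝ) (φ : ℝ → ℝ → ℝ) (f : ℝ → ℝ → ℝ → ℝ)
    (x y a : ℝ) : ℝ :=
  σ ^ 2 / 2 * deriv (fun a' => deriv (fun a'' => f x y a'') a') a
    + Real.cos a * deriv (fun x' => f x' y a) x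
    + Real.sin a * deriv (fun y' => f x y' a) y
    - (-(Real.sin a) * deriv (fun x' => φ x' y) x
        + Real.cos a * deriv (fun y' => φ x y') y)
      * deriv (fun a' => f x y a') a

/-- `f·e^{-φ}`. -/
noncomputable def fiberG (φ : ℝ → ℝ → ℝ) (f : ℝ → ℝ → ℝ → ℝ) (x y a : ℝ) : ℝ :=
  f x y a * Real.exp (-(φ x y))

/-- `∂_x (f e^{-φ})`. -/
noncomputable def fiberG1 (φ : ℝ → ℝ → ℝ) (f : ℝ → ℝ → ℝ → ℝ) (x y a : ℝ) : ℝ :=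
  deriv (fun x' => f x' y a * Real.exp (-(φ x' y))) x

/-- `∂_y (f e^{-φ})`. -/
noncomputable def fiberG2 (φ : ℝ → ℝ → ℝ) (f : ℝ → ℝ → ℝ → ℝ) (x y a : ℝ) : ℝ :=
  deriv (fun y' => f x y' a * Real.exp (-(φ x y'))) y

lemma my_int_deriv_zero (u : ℝ → ℝ) (hu : ContDiff ℝ 1 u) (h2 : HasCompactSupport u) :
    ∫ x, deriv u x = 0 := by
  have hc : Continuous (deriv u) := hu.continuous_deriv le_rfl
  have hcs : HasCompactSupport (deriv u) := h2.deriv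
  have hi : Integrable (deriv u) := hc.integrable_of_hasCompactSupport hcs
  have h1 := h2.integral_Iic_deriv_eq hu 0
  have h3 := h2.integral_Ioi_deriv_eq hu 0
  rw [← intervalIntegral.integral_Iic_add_Ioi hi.integrableOn hi.integrableOn, h1, h3]
  ring

lemma my_periodic_int_zero (h h' : ℝ → ℝ) (hd : ∀ a, HasDerivAt h (h' a) a)
    (hc : IntervalIntegrable h' volume 0 (2 * π)) (hp : h (2 * π) = h 0) :
    ∫ a in (0:ℝ)..(2 * π), h' a = 0 := by
  rw [intervalIntegral.integral_eq_sub_of_hasDerivAt (fun a _ => hd a) hc, hp, sub_self]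

/-- Infinitesimal invariance of the measure `μ(dξ,dα) = N⁻¹ e^{-φ(ξ)} dξ dα` for the
fiber lay-down generator: for every smooth `f` compactly supported in `ξ` and
`2π`-periodic in `α`, `∫_{ℝ²} ∫_0^{2π} (L_φ f)(ξ,α) e^{-φ(ξ)} dα dξ = 0`. -/
theorem fiber_generator_invariant_measure
    (σ : ℝ) (hσ : 0 < σ) (φ : ℝ → ℝ → ℝ)
    (hφ : ContDiff ℝ 1 (fun p : ℝ × ℝ => φ p.1 p.2))
    (hint : Integrable (fun p : ℝ × ℝ => Real.exp (-(φ p.1 p.2))))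
    (f : ℝ → ℝ → ℝ → ℝ)
    (hf : ContDiff ℝ (⊤ : ℕ∞) (fun p : ℝ × ℝ × ℝ => f p.1 p.2.1 p.2.2))
    (K : Set (ℝ × ℝ)) (hK : IsCompact K)
    (hsupp : ∀ x y a : ℝ, (x, y) ∉ K → f x y a = 0)
    (hper : ∀ x y a : ℝ, f x y (a + 2 * Real.pi) = f x y a) :
    ∫ p : ℝ × ℝ, (∫ a in (0:ℝ)..(2 * Real.pi),
        fiberGen σ φ f p.1 p.2 a * Real.exp (-(φ p.1 p.2))) = 0 := by
  have hle1 : (1 : WithTop ℕ∞) ≤ (⊤ : ℕ∞) := by exact_mod_cast le_top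
  have hf' : ContDiff ℝ (⊤ : ℕ∞) (fun p : ℝ × ℝ × ℝ => f p.1 p.2.1 p.2.2) := hf.of_le (by simp)
  -- slice smoothness
  have hf_x : ∀ y a : ℝ, ContDiff ℝ (⊤ : ℕ∞) (fun x => f x y a) := fun y a =>
    hf'.comp (contDiff_id.prodMk (contDiff_const (c := ((y, a) : ℝ × ℝ))))
  have hf_y : ∀ x a : ℝ, ContDiff ℝ (⊤ : ℕ∞) (fun y => f x y a) := fun x a =>
    hf'.comp ((contDiff_const (c := x)).prodMk (contDiff_id.prodMk (contDiff_const (c := a))))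
  have hf_a : ∀ x y : ℝ, ContDiff ℝ (⊤ : ℕ∞) (fun a => f x y a) := fun x y =>
    hf'.comp ((contDiff_const (c := x)).prodMk ((contDiff_const (c := y)).prodMk contDiff_id))
  have hφ_x : ∀ y : ℝ, ContDiff ℝ 1 (fun x => φ x y) := fun y =>
    hφ.comp (contDiff_id.prodMk (contDiff_const (c := y)))
  have hφ_y : ∀ x : ℝ, ContDiff ℝ 1 (fun y => φ x y) := fun x =>
    hφ.comp ((contDiff_const (c := x)).prodMk contDiff_id)
  -- HasDerivAt facts
  have hdx : ∀ x y a : ℝ, HasDerivAt (fun x' => f x' y a) (deriv (fun x' => f x' y a) x) x :=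
    fun x y a => ((hf_x y a).differentiable (by simp) x).hasDerivAt
  have hdy : ∀ x y a : ℝ, HasDerivAt (fun y' => f x y' a) (deriv (fun y' => f x y' a) y) y :=
    fun x y a => ((hf_y x a).differentiable (by simp) y).hasDerivAt
  have hψx : ∀ x y : ℝ, HasDerivAt (fun x' => Real.exp (-(φ x' y)))
      (Real.exp (-(φ x y)) * -(deriv (fun x' => φ x' y) x)) x := fun x y =>
    (((hφ_x y).differentiable (by simp) x).hasDerivAt.neg).exp
  have hψy : ∀ x y : ℝ, HasDerivAt (fun y' => Real.exp (-(φ x y')))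
      (Real.exp (-(φ x y)) * -(deriv (fun y' => φ x y') y)) y := fun x y =>
    (((hφ_y x).differentiable (by simp) y).hasDerivAt.neg).exp
  -- formulas for G1, G2
  have hG1 : ∀ x y a : ℝ, fiberG1 φ f x y a =
      deriv (fun x' => f x' y a) x * Real.exp (-(φ x y))
        + f x y a * (Real.exp (-(φ x y)) * -(deriv (fun x' => φ x' y) x)) := fun x y a =>
    ((hdx x y a).mul (hψx x y)).deriv
  have hG2 : ∀ x y a : ℝ, fiberG2 φ f x y a =
      deriv (fun y' => f x y' a) y * Real.exp (-(φ x y))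
        + f x y a * (Real.exp (-(φ x y)) * -(deriv (fun y' => φ x y') y)) := fun x y a =>
    ((hdy x y a).mul (hψy x y)).deriv
  -- fderiv representations of partial derivatives (for continuity)
  have hFd : Continuous (fderiv ℝ (fun p : ℝ × ℝ × ℝ => f p.1 p.2.1 p.2.2)) :=
    hf'.continuous_fderiv (by simp)
  have hφd : Continuous (fderiv ℝ (fun p : ℝ × ℝ => φ p.1 p.2)) :=
    hφ.continuous_fderiv (by simp)
  have hFdiff : Differentiable ℝ (fun p : ℝ × ℝ × ℝ => f p.1 p.2.1 p.2.2) :=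
    hf'.differentiable (by simp)
  have hφdiff : Differentiable ℝ (fun p : ℝ × ℝ => φ p.1 p.2) :=
    hφ.differentiable (by simp)
  have hfx_eq : ∀ x y a : ℝ, deriv (fun x' => f x' y a) x =
      fderiv ℝ (fun p : ℝ × ℝ × ℝ => f p.1 p.2.1 p.2.2) (x, y, a) (1, 0, 0) := by
    intro x y a
    have hline : HasDerivAt (fun x' : ℝ => ((x', y, a) : ℝ × ℝ × ℝ)) ((1 : ℝ), (0 : ℝ), (0 : ℝ)) x :=
      (hasDerivAt_id x).prodMk ((hasDerivAt_const x y).prodMk (hasDerivAt_const x a))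
    exact ((hFdiff (x, y, a)).hasFDerivAt.comp_hasDerivAt x hline).deriv
  have hfy_eq : ∀ x y a : ℝ, deriv (fun y' => f x y' a) y =
      fderiv ℝ (fun p : ℝ × ℝ × ℝ => f p.1 p.2.1 p.2.2) (x, y, a) (0, 1, 0) := by
    intro x y a
    have hline : HasDerivAt (fun y' : ℝ => ((x, y', a) : ℝ × ℝ × ℝ)) ((0 : ℝ), (1 : ℝ), (0 : ℝ)) y :=
      (hasDerivAt_const y x).prodMk ((hasDerivAt_id y).prodMk (hasDerivAt_const y a))
    exact ((hFdiff (x, y, a)).hasFDerivAt.comp_hasDerivAt y hline).deriv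
  have hφx_eq : ∀ x y : ℝ, deriv (fun x' => φ x' y) x =
      fderiv ℝ (fun p : ℝ × ℝ => φ p.1 p.2) (x, y) (1, 0) := by
    intro x y
    have hline : HasDerivAt (fun x' : ℝ => ((x', y) : ℝ × ℝ)) ((1 : ℝ), (0 : ℝ)) x :=
      (hasDerivAt_id x).prodMk (hasDerivAt_const x y)
    exact ((hφdiff (x, y)).hasFDerivAt.comp_hasDerivAt x hline).deriv
  have hφy_eq : ∀ x y : ℝ, deriv (fun y' => φ x y') y =
      fderiv ℝ (fun p : ℝ × ℝ => φ p.1 p.2) (x, y) (0, 1) := by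
    intro x y
    have hline : HasDerivAt (fun y' : ℝ => ((x, y') : ℝ × ℝ)) ((0 : ℝ), (1 : ℝ)) y :=
      (hasDerivAt_const y x).prodMk (hasDerivAt_id y)
    exact ((hφdiff (x, y)).hasFDerivAt.comp_hasDerivAt y hline).deriv
  -- joint continuity of G1 and G2
  have hcmap : Continuous (fun q : (ℝ × ℝ) × ℝ => ((q.1.1, q.1.2, q.2) : ℝ × ℝ × ℝ)) := by
    fun_prop
  have hψc : Continuous (fun q : (ℝ × ℝ) × ℝ => Real.exp (-(φ q.1.1 q.1.2))) := by
    have : Continuous (fun p : ℝ × ℝ => φ p.1 p.2) := hφ.continuous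
    fun_prop
  have hfc : Continuous (fun q : (ℝ × ℝ) × ℝ => f q.1.1 q.1.2 q.2) :=
    hf'.continuous.comp hcmap
  have hG1c : Continuous (fun q : (ℝ × ℝ) × ℝ => fiberG1 φ f q.1.1 q.1.2 q.2) := by
    have heq : (fun q : (ℝ × ℝ) × ℝ => fiberG1 φ f q.1.1 q.1.2 q.2) =
        fun q : (ℝ × ℝ) × ℝ =>
          fderiv ℝ (fun p : ℝ × ℝ × ℝ => f p.1 p.2.1 p.2.2) (q.1.1, q.1.2, q.2) (1, 0, 0)
            * Real.exp (-(φ q.1.1 q.1.2))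
          + f q.1.1 q.1.2 q.2 * (Real.exp (-(φ q.1.1 q.1.2))
            * -(fderiv ℝ (fun p : ℝ × ℝ => φ p.1 p.2) (q.1.1, q.1.2) (0, 1) * 0
                + fderiv ℝ (fun p : ℝ × ℝ => φ p.1 p.2) (q.1.1, q.1.2) (1, 0))) := by
      funext q
      rw [hG1 q.1.1 q.1.2 q.2, hfx_eq, hφx_eq]
      ring
    rw [heq]
    have c1 : Continuous fun q : (ℝ × ℝ) × ℝ =>
        fderiv ℝ (fun p : ℝ × ℝ × ℝ => f p.1 p.2.1 p.2.2) (q.1.1, q.1.2, q.2) (1, 0, 0) :=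
      (hFd.comp hcmap).clm_apply continuous_const
    have c2 : Continuous fun q : (ℝ × ℝ) × ℝ =>
        fderiv ℝ (fun p : ℝ × ℝ => φ p.1 p.2) (q.1.1, q.1.2) (1, 0) :=
      (hφd.comp continuous_fst).clm_apply continuous_const
    have c3 : Continuous fun q : (ℝ × ℝ) × ℝ =>
        fderiv ℝ (fun p : ℝ × ℝ => φ p.1 p.2) (q.1.1, q.1.2) (0, 1) :=
      (hφd.comp continuous_fst).clm_apply continuous_const
    fun_prop
  have hG2c : Continuous (fun q : (ℝ × ℝ) × ℝ => fiberG2 φ f q.1.1 q.1.2 q.2) := by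
    have heq : (fun q : (ℝ × ℝ) × ℝ => fiberG2 φ f q.1.1 q.1.2 q.2) =
        fun q : (ℝ × ℝ) × ℝ =>
          fderiv ℝ (fun p : ℝ × ℝ × ℝ => f p.1 p.2.1 p.2.2) (q.1.1, q.1.2, q.2) (0, 1, 0)
            * Real.exp (-(φ q.1.1 q.1.2))
          + f q.1.1 q.1.2 q.2 * (Real.exp (-(φ q.1.1 q.1.2))
            * -(fderiv ℝ (fun p : ℝ × ℝ => φ p.1 p.2) (q.1.1, q.1.2) (1, 0) * 0
                + fderiv ℝ (fun p : ℝ × ℝ => φ p.1 p.2) (q.1.1, q.1.2) (0, 1))) := by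
      funext q
      rw [hG2 q.1.1 q.1.2 q.2, hfy_eq, hφy_eq]
      ring
    rw [heq]
    have c1 : Continuous fun q : (ℝ × ℝ) × ℝ =>
        fderiv ℝ (fun p : ℝ × ℝ × ℝ => f p.1 p.2.1 p.2.2) (q.1.1, q.1.2, q.2) (0, 1, 0) :=
      (hFd.comp hcmap).clm_apply continuous_const
    have c2 : Continuous fun q : (ℝ × ℝ) × ℝ =>
        fderiv ℝ (fun p : ℝ × ℝ => φ p.1 p.2) (q.1.1, q.1.2) (1, 0) :=
      (hφd.comp continuous_fst).clm_apply continuous_const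
    have c3 : Continuous fun q : (ℝ × ℝ) × ℝ =>
        fderiv ℝ (fun p : ℝ × ℝ => φ p.1 p.2) (q.1.1, q.1.2) (0, 1) :=
      (hφd.comp continuous_fst).clm_apply continuous_const
    fun_prop
  -- vanishing of G1, G2 outside K
  have hG1zero : ∀ x y a : ℝ, (x, y) ∉ K → fiberG1 φ f x y a = 0 := by
    intro x y a hxy
    have hopen : IsOpen {x' : ℝ | (x', y) ∉ K} := by
      have : IsClosed {x' : ℝ | (x', y) ∈ K} :=
        hK.isClosed.preimage (by fun_prop : Continuous fun x' : ℝ => ((x', y) : ℝ × ℝ))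
      exact this.isOpen_compl
    have hev : (fun x' => f x' y a * Real.exp (-(φ x' y))) =ᶠ[nhds x] (fun _ => (0 : ℝ)) := by
      filter_upwards [hopen.mem_nhds hxy] with x' hx'
      rw [hsupp x' y a hx', zero_mul]
    have := hev.deriv_eq
    rw [fiberG1, this, deriv_const]
  have hG2zero : ∀ x y a : ℝ, (x, y) ∉ K → fiberG2 φ f x y a = 0 := by
    intro x y a hxy
    have hopen : IsOpen {y' : ℝ | (x, y') ∉ K} := by
      have : IsClosed {y' : ℝ | (x, y') ∈ K} :=
        hK.isClosed.preimage (by fun_prop : Continuous fun y' : ℝ => ((x, y') : ℝ × ℝ))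
      exact this.isOpen_compl
    have hev : (fun y' => f x y' a * Real.exp (-(φ x y'))) =ᶠ[nhds y] (fun _ => (0 : ℝ)) := by
      filter_upwards [hopen.mem_nhds hxy] with y' hy'
      rw [hsupp x y' a hy', zero_mul]
    have := hev.deriv_eq
    rw [fiberG2, this, deriv_const]
  -- Step 1: rewrite the inner (angular) integral
  have key : ∀ x y : ℝ,
      (∫ a in (0:ℝ)..(2 * Real.pi), fiberGen σ φ f x y a * Real.exp (-(φ x y))) =
      ∫ a in (0:ℝ)..(2 * Real.pi),
        (Real.cos a * fiberG1 φ f x y a + Real.sin a * fiberG2 φ f x y a) := by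
    intro x y
    have hfa := hf_a x y
    have hfa1 : ContDiff ℝ (⊤ : ℕ∞) (deriv fun a => f x y a) :=
      (contDiff_infty_iff_deriv.mp hfa).2
    have hdfa : ∀ a : ℝ, HasDerivAt (fun a' => f x y a') (deriv (fun a' => f x y a') a) a :=
      fun a => (hfa.differentiable (by simp) a).hasDerivAt
    -- the "b·f" function and its derivative
    set c1 : ℝ := deriv (fun x' => φ x' y) x with hc1
    set c2 : ℝ := deriv (fun y' => φ x y') y with hc2
    have hh : ∀ a : ℝ, HasDerivAt
        (fun a' => (-Real.sin a' * c1 + Real.cos a' * c2) * f x y a')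
        ((-Real.cos a * c1 + -Real.sin a * c2) * f x y a
          + (-Real.sin a * c1 + Real.cos a * c2) * deriv (fun a' => f x y a') a) a := by
      intro a
      exact (((Real.hasDerivAt_sin a).neg.mul_const c1).add
        ((Real.hasDerivAt_cos a).mul_const c2)).mul (hdfa a)
    -- pointwise identity
    have hid : ∀ a : ℝ, fiberGen σ φ f x y a * Real.exp (-(φ x y)) =
        (Real.cos a * fiberG1 φ f x y a + Real.sin a * fiberG2 φ f x y a)
          + (σ ^ 2 / 2 * deriv (fun a' => deriv (fun a'' => f x y a'') a') a
              - ((-Real.cos a * c1 + -Real.sin a * c2) * f x y a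
                  + (-Real.sin a * c1 + Real.cos a * c2) * deriv (fun a' => f x y a') a))
            * Real.exp (-(φ x y)) := by
      intro a
      rw [hG1 x y a, hG2 x y a, fiberGen, ← hc1, ← hc2]
      ring
    -- integrability facts
    have hcontD2 : Continuous (fun a => deriv (fun a' => deriv (fun a'' => f x y a'') a') a) :=
      hfa1.continuous_deriv hle1
    have hcontD1 : Continuous (fun a => deriv (fun a' => f x y a') a) := hfa1.continuous
    have hcontf : Continuous (fun a => f x y a) := hfa.continuous
    have hT1int : IntervalIntegrable
        (fun a => σ ^ 2 / 2 * deriv (fun a' => deriv (fun a'' => f x y a'') a') a)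
        volume 0 (2 * Real.pi) := (continuous_const.mul hcontD2).intervalIntegrable _ _
    have hT2int : IntervalIntegrable
        (fun a => (-Real.cos a * c1 + -Real.sin a * c2) * f x y a
          + (-Real.sin a * c1 + Real.cos a * c2) * deriv (fun a' => f x y a') a)
        volume 0 (2 * Real.pi) := by
      apply Continuous.intervalIntegrable
      fun_prop
    have hT3int : IntervalIntegrable
        (fun a => Real.cos a * fiberG1 φ f x y a + Real.sin a * fiberG2 φ f x y a)
        volume 0 (2 * Real.pi) := by
      apply Continuous.intervalIntegrable
      have hmapa : Continuous (fun a : ℝ => (((x, y), a) : (ℝ × ℝ) × ℝ)) := by fun_prop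
      have h1 : Continuous (fun a : ℝ => fiberG1 φ f x y a) := hG1c.comp hmapa
      have h2 : Continuous (fun a : ℝ => fiberG2 φ f x y a) := hG2c.comp hmapa
      fun_prop
    -- the two exact terms integrate to zero
    have hD2zero : (∫ a in (0:ℝ)..(2 * Real.pi),
        deriv (fun a' => deriv (fun a'' => f x y a'') a') a) = 0 := by
      apply my_periodic_int_zero (deriv fun a'' => f x y a'')
      · exact fun a => (hfa1.differentiable (by simp) a).hasDerivAt
      · exact hcontD2.intervalIntegrable _ _
      · have h2 : (fun b => f x y (b + 2 * Real.pi)) = fun b => f x y b :=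
          funext fun b => hper x y b
        have h3 := deriv_comp_add_const (f := fun a' => f x y a') (a := 2 * Real.pi) (x := (0:ℝ))
        rw [h2, zero_add] at h3
        exact h3.symm
    have hBzero : (∫ a in (0:ℝ)..(2 * Real.pi),
        ((-Real.cos a * c1 + -Real.sin a * c2) * f x y a
          + (-Real.sin a * c1 + Real.cos a * c2) * deriv (fun a' => f x y a') a)) = 0 := by
      apply my_periodic_int_zero (fun a' => (-Real.sin a' * c1 + Real.cos a' * c2) * f x y a') _ hh
        hT2int
      have hf0 : f x y (2 * Real.pi) = f x y 0 := by
        have := hper x y 0; rwa [zero_add] at this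
      simp [Real.sin_two_pi, Real.cos_two_pi, hf0]
    -- combine
    calc (∫ a in (0:ℝ)..(2 * Real.pi), fiberGen σ φ f x y a * Real.exp (-(φ x y)))
        = ∫ a in (0:ℝ)..(2 * Real.pi),
          ((Real.cos a * fiberG1 φ f x y a + Real.sin a * fiberG2 φ f x y a)
            + (σ ^ 2 / 2 * deriv (fun a' => deriv (fun a'' => f x y a'') a') a
                - ((-Real.cos a * c1 + -Real.sin a * c2) * f x y a
                    + (-Real.sin a * c1 + Real.cos a * c2) * deriv (fun a' => f x y a') a))
              * Real.exp (-(φ x y))) :=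
          intervalIntegral.integral_congr (fun a _ => hid a)
      _ = (∫ a in (0:ℝ)..(2 * Real.pi),
            (Real.cos a * fiberG1 φ f x y a + Real.sin a * fiberG2 φ f x y a))
          + (∫ a in (0:ℝ)..(2 * Real.pi),
            (σ ^ 2 / 2 * deriv (fun a' => deriv (fun a'' => f x y a'') a') a
                - ((-Real.cos a * c1 + -Real.sin a * c2) * f x y a
                    + (-Real.sin a * c1 + Real.cos a * c2) * deriv (fun a' => f x y a') a))
              * Real.exp (-(φ x y))) := by
          apply intervalIntegral.integral_add hT3int
          exact (hT1int.sub hT2int).mul_const _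
      _ = ∫ a in (0:ℝ)..(2 * Real.pi),
            (Real.cos a * fiberG1 φ f x y a + Real.sin a * fiberG2 φ f x y a) := by
          rw [intervalIntegral.integral_mul_const, intervalIntegral.integral_sub hT1int hT2int,
            intervalIntegral.integral_const_mul, hD2zero, hBzero]
          ring
  -- Step 2: rewrite the outer integral accordingly and to a set integral
  have step1 : ∫ p : ℝ × ℝ, (∫ a in (0:ℝ)..(2 * Real.pi),
        fiberGen σ φ f p.1 p.2 a * Real.exp (-(φ p.1 p.2))) =
      ∫ p : ℝ × ℝ, (∫ a in Set.Ioc (0:ℝ) (2 * Real.pi),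
        (Real.cos a * fiberG1 φ f p.1 p.2 a + Real.sin a * fiberG2 φ f p.1 p.2 a)) := by
    apply integral_congr_ae
    apply Filter.Eventually.of_forall
    intro p
    dsimp only
    rw [key p.1 p.2, intervalIntegral.integral_of_le (by positivity)]
  rw [step1]
  -- Fubini
  have hQc : Continuous (Function.uncurry (fun (p : ℝ × ℝ) (a : ℝ) =>
      Real.cos a * fiberG1 φ f p.1 p.2 a + Real.sin a * fiberG2 φ f p.1 p.2 a)) := by
    have h1 : Continuous fun q : (ℝ × ℝ) × ℝ => fiberG1 φ f q.1.1 q.1.2 q.2 := hG1c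
    have h2 : Continuous fun q : (ℝ × ℝ) × ℝ => fiberG2 φ f q.1.1 q.1.2 q.2 := hG2c
    unfold Function.uncurry
    fun_prop
  have hQvanish : ∀ z : (ℝ × ℝ) × ℝ, z.1 ∉ K →
      Function.uncurry (fun (p : ℝ × ℝ) (a : ℝ) =>
        Real.cos a * fiberG1 φ f p.1 p.2 a + Real.sin a * fiberG2 φ f p.1 p.2 a) z = 0 := by
    intro z hz
    simp only [Function.uncurry]
    rw [hG1zero z.1.1 z.1.2 z.2 (by simpa using hz), hG2zero z.1.1 z.1.2 z.2 (by simpa using hz)]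
    ring
  have hQint : Integrable (Function.uncurry (fun (p : ℝ × ℝ) (a : ℝ) =>
      Real.cos a * fiberG1 φ f p.1 p.2 a + Real.sin a * fiberG2 φ f p.1 p.2 a))
      ((volume : Measure (ℝ × ℝ)).prod (volume.restrict (Set.Ioc 0 (2 * Real.pi)))) := by
    obtain ⟨C, hC⟩ := (hK.prod isCompact_Icc :
        IsCompact (K ×ˢ Set.Icc (0:ℝ) (2 * Real.pi))).exists_bound_of_continuousOn
      hQc.continuousOn
    set Q := Function.uncurry (fun (p : ℝ × ℝ) (a : ℝ) =>
      Real.cos a * fiberG1 φ f p.1 p.2 a + Real.sin a * fiberG2 φ f p.1 p.2 a) with hQ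
    set μ := ((volume : Measure (ℝ × ℝ)).prod (volume.restrict (Set.Ioc 0 (2 * Real.pi)))) with hμ
    have heq : Q = Set.indicator (K ×ˢ (Set.univ : Set ℝ)) Q := by
      funext z
      by_cases hz : z.1 ∈ K
      · rw [Set.indicator_of_mem (Set.mem_prod.mpr ⟨hz, Set.mem_univ _⟩)]
      · rw [Set.indicator_of_notMem (fun hmem => hz hmem.1), hQvanish z hz]
    rw [heq]
    rw [integrable_indicator_iff (hK.isClosed.measurableSet.prod MeasurableSet.univ)]
    apply Measure.integrableOn_of_bounded (M := max C 0)
    · rw [Measure.prod_prod, Measure.restrict_apply_univ]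
      exact (ENNReal.mul_lt_top hK.measure_lt_top measure_Ioc_lt_top).ne
    · exact hQc.aestronglyMeasurable
    · have hnull : ∀ᵐ z : (ℝ × ℝ) × ℝ ∂μ, z.2 ∈ Set.Ioc (0:ℝ) (2 * Real.pi) := by
        rw [ae_iff]
        have hset : {z : (ℝ × ℝ) × ℝ | ¬ z.2 ∈ Set.Ioc (0:ℝ) (2 * Real.pi)} =
            (Set.univ : Set (ℝ × ℝ)) ×ˢ (Set.Ioc (0:ℝ) (2 * Real.pi))ᶜ := by
          ext z; simp [Set.mem_prod]
        rw [hset, hμ, Measure.prod_prod, Measure.restrict_apply (measurableSet_Ioc.compl)]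
        simp
      have hmem := ae_restrict_mem (μ := μ)
        (hK.isClosed.measurableSet.prod (MeasurableSet.univ : MeasurableSet (Set.univ : Set ℝ)))
      filter_upwards [hmem, ae_restrict_of_ae hnull] with z hz1 hz2
      have hzK : z ∈ K ×ˢ Set.Icc (0:ℝ) (2 * Real.pi) := ⟨hz1.1, Set.Ioc_subset_Icc_self hz2⟩
      exact le_trans (hC z hzK) (le_max_left _ _)
  rw [MeasureTheory.integral_integral_swap hQint]
  -- inner spatial integral vanishes for every angle
  have hinner : ∀ a : ℝ, (∫ p : ℝ × ℝ,
      (Real.cos a * fiberG1 φ f p.1 p.2 a + Real.sin a * fiberG2 φ f p.1 p.2 a)) = 0 := by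
    intro a
    have hG1int : Integrable (fun p : ℝ × ℝ => fiberG1 φ f p.1 p.2 a) := by
      apply Continuous.integrable_of_hasCompactSupport
      · exact hG1c.comp ((continuous_id.prodMk (continuous_const (y := a))) :
          Continuous fun p : ℝ × ℝ => ((p, a) : (ℝ × ℝ) × ℝ))
      · exact HasCompactSupport.intro hK (fun p hp => hG1zero p.1 p.2 a hp)
    have hG2int : Integrable (fun p : ℝ × ℝ => fiberG2 φ f p.1 p.2 a) := by
      apply Continuous.integrable_of_hasCompactSupport
      · exact hG2c.comp ((continuous_id.prodMk (continuous_const (y := a))) :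
          Continuous fun p : ℝ × ℝ => ((p, a) : (ℝ × ℝ) × ℝ))
      · exact HasCompactSupport.intro hK (fun p hp => hG2zero p.1 p.2 a hp)
    have hG1zero' : (∫ p : ℝ × ℝ, fiberG1 φ f p.1 p.2 a) = 0 := by
      have hint' := hG1int
      rw [Measure.volume_eq_prod] at hint'
      rw [show (volume : Measure (ℝ × ℝ)) = (volume : Measure ℝ).prod volume from
        Measure.volume_eq_prod ℝ ℝ]
      rw [MeasureTheory.integral_prod_symm _ hint']
      have hx0 : ∀ y : ℝ, (∫ x : ℝ, fiberG1 φ f x y a) = 0 := by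
        intro y
        have hu : ContDiff ℝ 1 (fun x' => f x' y a * Real.exp (-(φ x' y))) :=
          ((hf_x y a).of_le hle1).mul (Real.contDiff_exp.comp (hφ_x y).neg)
        have hcs : HasCompactSupport (fun x' => f x' y a * Real.exp (-(φ x' y))) := by
          apply HasCompactSupport.intro (hK.image continuous_fst)
          intro x hx
          have : (x, y) ∉ K := fun h => hx ⟨(x, y), h, rfl⟩
          rw [hsupp x y a this, zero_mul]
        exact my_int_deriv_zero _ hu hcs
      simp only [hx0]
      simp
    have hG2zero' : (∫ p : ℝ × ℝ, fiberG2 φ f p.1 p.2 a) = 0 := by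
      have hint' := hG2int
      rw [Measure.volume_eq_prod] at hint'
      rw [show (volume : Measure (ℝ × ℝ)) = (volume : Measure ℝ).prod volume from
        Measure.volume_eq_prod ℝ ℝ]
      rw [MeasureTheory.integral_prod _ hint']
      have hy0 : ∀ x : ℝ, (∫ y : ℝ, fiberG2 φ f x y a) = 0 := by
        intro x
        have hu : ContDiff ℝ 1 (fun y' => f x y' a * Real.exp (-(φ x y'))) :=
          ((hf_y x a).of_le hle1).mul (Real.contDiff_exp.comp (hφ_y x).neg)
        have hcs : HasCompactSupport (fun y' => f x y' a * Real.exp (-(φ x y'))) := by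
          apply HasCompactSupport.intro (hK.image continuous_snd)
          intro y hy
          have : (x, y) ∉ K := fun h => hy ⟨(x, y), h, rfl⟩
          rw [hsupp x y a this, zero_mul]
        exact my_int_deriv_zero _ hu hcs
      simp only [hy0]
      simp
    rw [integral_add (hG1int.const_mul _) (hG2int.const_mul _),
      integral_const_mul, integral_const_mul, hG1zero', hG2zero']
    ring
  simp only [hinner]
  simp
end

section
/- (Deterministic controllability of the fiber lay-down dynamics.) Let ξ₀, ξ̃ ∈ ℝ², α₀, α̃ ∈ ℝ, ε > 0, and let t > 0 satisfy t ≥ ‖ξ̃ − ξ₀‖. Then there exists a continuous path ᾱ : [0, t] → ℝ with ᾱ(0) = α₀ such that |ᾱ(t) − α̃| < ε and ‖ξ₀ + ∫_0^t (cos ᾱ(s), sin ᾱ(s)) ds − ξ̃‖ < ε. -/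
open MeasureTheory Real

/-- Euclidean distance on `ℝ²` (represented as `ℝ × ℝ`). -/
noncomputable def eDist2 (p q : ℝ × ℝ) : ℝ :=
  Real.sqrt ((p.1 - q.1) ^ 2 + (p.2 - q.2) ^ 2)

/-!
Identify `ℝ²` with `ℂ`, so that the position reached by an angle path `A` is
`ξ₀ + ∫ exp (i A)`. To reach the displacement `v`, hold the angle at `arg v` for time `‖v‖`
and spend the remaining time `t - ‖v‖` turning once around the circle at constant speed,
which contributes no net displacement. This hits `v` exactly, but with the wrong angles at
the endpoints; correcting the angle on windows of length `δ` at both ends changes the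
integral by at most `4 δ`.
-/

open Complex Set

lemma eDist2_eq_norm (p q : ℝ × ℝ) :
    eDist2 p q = ‖((p.1 - q.1 : ℝ) : ℂ) + ((p.2 - q.2 : ℝ) : ℂ) * I‖ :=
  (norm_add_mul_I _ _).symm

lemma integral_cexp_mul_I {A : ℝ → ℝ} (hA : Continuous A) (a b : ℝ) :
    ∫ s in a..b, cexp (A s * I) =
      ((∫ s in a..b, Real.cos (A s) : ℝ) : ℂ) + ((∫ s in a..b, Real.sin (A s) : ℝ) : ℂ) * I := by
  have hcos : Continuous fun s => ((Real.cos (A s) : ℝ) : ℂ) := by fun_prop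
  have hsin : Continuous fun s => ((Real.sin (A s) : ℝ) : ℂ) * I := by fun_prop
  rw [← intervalIntegral.integral_ofReal, ← intervalIntegral.integral_ofReal,
    ← intervalIntegral.integral_mul_const,
    ← intervalIntegral.integral_add (hcos.intervalIntegrable a b) (hsin.intervalIntegrable a b)]
  congr 1 with s
  rw [exp_mul_I]
  push_cast
  rfl

lemma integral_cexp_full_turn (θ a b : ℝ) :
    ∫ s in a..b, cexp ((θ + 2 * π / (b - a) * (s - a) : ℝ) * I) = 0 := by
  rcases eq_or_ne a b with rfl | hab
  · exact intervalIntegral.integral_same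
  set ω : ℝ := 2 * π / (b - a)
  have hω : (ω : ℂ) * I ≠ 0 := by simp [ω, sub_eq_zero, hab.symm, pi_ne_zero]
  have hturn : (ω : ℂ) * I * b = ω * I * a + 2 * π * I := by
    have h : ω * (b - a) = 2 * π := div_mul_cancel₀ _ (sub_ne_zero.2 hab.symm)
    have h' := congrArg (fun x : ℝ => (x : ℂ) * I) h
    push_cast at h'
    linear_combination h'
  calc ∫ s in a..b, cexp ((θ + ω * (s - a) : ℝ) * I)
      = ∫ s in a..b, cexp ((θ - ω * a : ℝ) * I) * cexp (ω * I * s) := by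
        congr 1 with s
        rw [← Complex.exp_add]
        push_cast
        ring_nf
    _ = 0 := by
        rw [intervalIntegral.integral_const_mul, integral_exp_mul_complex hω, hturn,
          Complex.exp_add, exp_two_pi_mul_I, mul_one, sub_self, zero_div, mul_zero]

-- For `d = t` the speed `2 * π / 0` is `0`, and the path just holds `θ`.
noncomputable def holdThenLoop (θ d t s : ℝ) : ℝ :=
  θ + 2 * π / (t - d) * max (s - d) 0

@[fun_prop]
lemma continuous_holdThenLoop (θ d t : ℝ) : Continuous (holdThenLoop θ d t) := by
  unfold holdThenLoop
  fun_prop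

lemma integral_cexp_holdThenLoop (θ : ℝ) {d t : ℝ} (hd : 0 ≤ d) (hdt : d ≤ t) :
    ∫ s in (0 : ℝ)..t, cexp (holdThenLoop θ d t s * I) = d * cexp (θ * I) := by
  have hint : ∀ u w, IntervalIntegrable (fun s => cexp (holdThenLoop θ d t s * I)) volume u w :=
    fun u w => (by fun_prop : Continuous _).intervalIntegrable u w
  have hhold : ∫ s in (0 : ℝ)..d, cexp (holdThenLoop θ d t s * I) = d * cexp (θ * I) := by
    rw [intervalIntegral.integral_congr (g := fun _ => cexp (θ * I)) fun s hs => ?_]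
    · simp
    rw [uIcc_of_le hd] at hs
    simp [holdThenLoop, max_eq_right (sub_nonpos.2 hs.2)]
  have hloop : ∫ s in d..t, cexp (holdThenLoop θ d t s * I) = 0 := by
    rw [← integral_cexp_full_turn θ d t]
    refine intervalIntegral.integral_congr fun s hs => ?_
    rw [uIcc_of_le hdt] at hs
    simp only [holdThenLoop, max_eq_left (sub_nonneg.2 hs.1)]
  rw [← intervalIntegral.integral_add_adjacent_intervals (hint 0 d) (hint d t), hhold, hloop,
    add_zero]

noncomputable def adjustEnds (g : ℝ → ℝ) (x y δ t : ℝ) (s : ℝ) : ℝ :=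
  g s + (x - g 0) * max (1 - s / δ) 0 + (y - g t) * max (1 - (t - s) / δ) 0

section adjustEnds

variable {g : ℝ → ℝ} {x y δ t : ℝ}

lemma continuous_adjustEnds (hg : Continuous g) : Continuous (adjustEnds g x y δ t) := by
  unfold adjustEnds
  fun_prop

lemma adjustEnds_zero (hδ : 0 < δ) (hδt : δ ≤ t) : adjustEnds g x y δ t 0 = x := by
  have : 1 ≤ t / δ := (one_le_div hδ).2 hδt
  simp [adjustEnds, max_eq_right (sub_nonpos.2 this)]

lemma adjustEnds_self (hδ : 0 < δ) (hδt : δ ≤ t) : adjustEnds g x y δ t t = y := by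
  have : 1 ≤ t / δ := (one_le_div hδ).2 hδt
  simp [adjustEnds, max_eq_right (sub_nonpos.2 this)]

lemma adjustEnds_eqOn (hδ : 0 < δ) : EqOn (adjustEnds g x y δ t) g (Icc δ (t - δ)) := by
  intro s hs
  have h₀ : 1 ≤ s / δ := (one_le_div hδ).2 hs.1
  have h₁ : 1 ≤ (t - s) / δ := (one_le_div hδ).2 (by linarith [hs.2])
  simp [adjustEnds, max_eq_right (sub_nonpos.2 h₀), max_eq_right (sub_nonpos.2 h₁)]

end adjustEnds

lemma norm_integral_le_of_eqOn_zero {E : Type*} [NormedAddCommGroup E] [NormedSpace ℝ E]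
    {h : ℝ → E} {a b δ C : ℝ} (hh : Continuous h) (hδ : 0 ≤ δ) (hab : a + 2 * δ ≤ b)
    (h0 : EqOn h 0 (Icc (a + δ) (b - δ))) (hC : ∀ x, ‖h x‖ ≤ C) :
    ‖∫ x in a..b, h x‖ ≤ 2 * C * δ := by
  have hint : ∀ u w, IntervalIntegrable h volume u w := hh.intervalIntegrable
  have hend : ∀ u w, w - u = δ → ‖∫ x in u..w, h x‖ ≤ C * δ := fun u w huw => by
    simpa [huw, abs_of_nonneg hδ] using
      intervalIntegral.norm_integral_le_of_norm_le_const (a := u) (b := w) fun x _ => hC x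
  have hmid : ∫ x in (a + δ)..(b - δ), h x = 0 := by
    rw [intervalIntegral.integral_congr (g := 0) (h0.mono (uIcc_of_le (by linarith)).le)]
    simp
  rw [← intervalIntegral.integral_add_adjacent_intervals (hint a (b - δ)) (hint (b - δ) b),
    ← intervalIntegral.integral_add_adjacent_intervals (hint a (a + δ)) (hint (a + δ) (b - δ)),
    hmid, add_zero]
  calc _ ≤ ‖∫ x in a..(a + δ), h x‖ + ‖∫ x in (b - δ)..b, h x‖ := norm_add_le _ _
    _ ≤ C * δ + C * δ := add_le_add (hend _ _ (by ring)) (hend _ _ (by ring))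
    _ = 2 * C * δ := by ring

theorem exists_continuous_norm_integral_cexp_sub_lt (α₀ α₁ : ℝ) {v : ℂ} {t ε : ℝ}
    (hε : 0 < ε) (ht : 0 < t) (hv : ‖v‖ ≤ t) :
    ∃ A : ℝ → ℝ, Continuous A ∧ A 0 = α₀ ∧ A t = α₁ ∧
      ‖(∫ s in (0 : ℝ)..t, cexp (A s * I)) - v‖ < ε := by
  set g := holdThenLoop (arg v) ‖v‖ t
  set δ := min (t / 2) (ε / 5)
  have hδ : 0 < δ := lt_min (by positivity) (by positivity)
  have hδt : 2 * δ ≤ t := by linarith [min_le_left (t / 2) (ε / 5)]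
  have hδε : δ ≤ ε / 5 := min_le_right _ _
  have hg : Continuous g := continuous_holdThenLoop _ _ _
  set A := adjustEnds g α₀ α₁ δ t
  have hA : Continuous A := continuous_adjustEnds hg
  refine ⟨A, hA, adjustEnds_zero hδ (by linarith), adjustEnds_self hδ (by linarith), ?_⟩
  have hgv : ∫ s in (0 : ℝ)..t, cexp (g s * I) = v := by
    rw [integral_cexp_holdThenLoop _ (norm_nonneg v) hv, norm_mul_exp_arg_mul_I]
  have hdiff : ‖∫ s in (0 : ℝ)..t, (cexp (A s * I) - cexp (g s * I))‖ ≤ 2 * 2 * δ :=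
    norm_integral_le_of_eqOn_zero (by fun_prop) hδ.le (by linarith)
      (fun s hs => by simp [A, adjustEnds_eqOn hδ (by simpa using hs)])
      fun s => (norm_sub_le _ _).trans (by simp [norm_exp_ofReal_mul_I]; norm_num)
  rw [intervalIntegral.integral_sub ((by fun_prop : Continuous _).intervalIntegrable _ _)
    ((by fun_prop : Continuous _).intervalIntegrable _ _), hgv] at hdiff
  linarith

/-- Deterministic controllability of the fiber lay-down dynamics: given initial data
`(ξ₀, α₀)`, targets `(ξ̃, α̃)`, `ε > 0` and a time `t > 0` with `t ≥ ‖ξ̃ − ξ₀‖`,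
there is a continuous angle path `ᾱ` on `[0, t]` starting at `α₀` whose terminal
angle is `ε`-close to `α̃` and which steers the position
`ξ₀ + ∫_0^t (cos ᾱ(s), sin ᾱ(s)) ds` to within `ε` of `ξ̃`. -/
theorem fiber_lay_down_controllability
    (ξ₀ ξtil : ℝ × ℝ) (α₀ αtil ε : ℝ) (hε : 0 < ε)
    (t : ℝ) (ht : 0 < t) (hdist : eDist2 ξtil ξ₀ ≤ t) :
    ∃ ᾱ : ℝ → ℝ, ContinuousOn ᾱ (Set.Icc 0 t) ∧ ᾱ 0 = α₀ ∧
      |ᾱ t - αtil| < ε ∧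
      eDist2 (ξ₀.1 + ∫ s in (0:ℝ)..t, Real.cos (ᾱ s),
              ξ₀.2 + ∫ s in (0:ℝ)..t, Real.sin (ᾱ s)) ξtil < ε := by
  rw [eDist2_eq_norm] at hdist
  obtain ⟨A, hA, hA0, hAt, hAv⟩ :=
    exists_continuous_norm_integral_cexp_sub_lt α₀ αtil hε ht hdist
  refine ⟨A, hA.continuousOn, hA0, by simpa [hAt] using hε, ?_⟩
  rw [eDist2_eq_norm]
  convert hAv using 2
  rw [integral_cexp_mul_I hA]
  push_cast
  ring
end

section
/- Let κ be a Markov kernel on a measurable space S, let μ be a probability measure on S, and let A ⊆ S be measurable. Suppose there is a measurable set N ⊆ S with μ(N) = 0 such that κ(x, N) = 0 for every x ∈ S, and such that for every y ∉ N the Cesàro averages converge: (1/n) ∑_{i=0}^{n−1} κ^i(y, A) → μ(A) as n → ∞. Then for every x ∈ S one has (1/n) ∑_{i=1}^{n} κ^i(x, A) → μ(A) as n → ∞. In particular, if μ(A) > 0 then ∑_{n=1}^{∞} κ^n(x, A) = ∞ for every x ∈ S. -/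
open MeasureTheory ProbabilityTheory Filter

/-- The `n`-step kernel of a Markov kernel `κ`: `κ⁰(x,·) = δ_x` and
`κ^{n+1}(x, A) = ∫ κⁿ(y, A) κ(x, dy)`. -/
noncomputable def kernelIter {S : Type*} [MeasurableSpace S]
    (κ : Kernel S S) : ℕ → Kernel S S
  | 0 => Kernel.id
  | n + 1 => (kernelIter κ n).comp κ

open Finset

/-!
Writing `κ^{i+1}(x, A) = ∫ κ^i(y, A) κ(x, dy)`, the Cesàro average of `κ^{i+1}(x, A)` over
`i < n` is the `κ(x, ·)`-integral of the Cesàro average of `κ^i(·, A)`. Since `κ(x, N) = 0`,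
the integrands converge to `μ(A)` for `κ(x, ·)`-almost every `y`, and they are bounded by `1`,
so dominated convergence gives the first claim. If `∑ κ^{n+1}(x, A)` were finite, the terms
would tend to `0`, hence so would their Cesàro averages, forcing `μ(A) = 0`.
-/

noncomputable def cesaroMean (u : ℕ → ℝ) (n : ℕ) : ℝ :=
  (1 / (n : ℝ)) * ∑ i ∈ range n, u i

lemma norm_cesaroMean_le {u : ℕ → ℝ} {C : ℝ} (hu : ∀ i, ‖u i‖ ≤ C) (n : ℕ) :
    ‖cesaroMean u n‖ ≤ C := by
  have hC : 0 ≤ C := (norm_nonneg _).trans (hu 0)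
  rcases Nat.eq_zero_or_pos n with rfl | hn
  · simpa [cesaroMean] using hC
  have hn' : (0 : ℝ) < n := Nat.cast_pos.mpr hn
  calc ‖cesaroMean u n‖ = (1 / (n : ℝ)) * ‖∑ i ∈ range n, u i‖ := by
        rw [cesaroMean, norm_mul, Real.norm_of_nonneg (by positivity)]
    _ ≤ (1 / (n : ℝ)) * (n * C) := by
        gcongr
        simpa using norm_sum_le_of_le (range n) fun i _ => hu i
    _ = C := by field_simp

lemma Summable.tendsto_cesaroMean_zero {u : ℕ → ℝ} (hu : Summable u) :
    Tendsto (cesaroMean u) atTop (nhds 0) :=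
  hu.tendsto_atTop_zero.cesaro.congr fun n => by rw [cesaroMean, one_div]

lemma ENNReal.tsum_eq_top_of_tendsto_cesaroMean {u : ℕ → ENNReal} {c : ℝ}
    (hu : Tendsto (cesaroMean fun i => (u i).toReal) atTop (nhds c)) (hc : c ≠ 0) :
    ∑' i, u i = ⊤ := by
  by_contra hfin
  exact hc (tendsto_nhds_unique hu (ENNReal.summable_toReal hfin).tendsto_cesaroMean_zero)

lemma integral_cesaroMean {S : Type*} [MeasurableSpace S] {ν : Measure S} {f : ℕ → S → ℝ}
    (hf : ∀ i, Integrable (f i) ν) (n : ℕ) :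
    ∫ y, cesaroMean (fun i => f i y) n ∂ν = cesaroMean (fun i => ∫ y, f i y ∂ν) n := by
  simp only [cesaroMean]
  rw [integral_const_mul, integral_finsetSum _ fun i _ => hf i]

lemma tendsto_cesaroMean_integral_of_ae {S : Type*} [MeasurableSpace S] {ν : Measure S}
    [IsProbabilityMeasure ν] {f : ℕ → S → ℝ} {C c : ℝ}
    (hf : ∀ i, AEStronglyMeasurable (f i) ν) (hbound : ∀ i y, ‖f i y‖ ≤ C)
    (hlim : ∀ᵐ y ∂ν, Tendsto (cesaroMean fun i => f i y) atTop (nhds c)) :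
    Tendsto (cesaroMean fun i => ∫ y, f i y ∂ν) atTop (nhds c) := by
  have hint : ∀ i, Integrable (f i) ν := fun i =>
    Integrable.of_bound (hf i) C (ae_of_all _ (hbound i))
  have hmeas : ∀ n, AEStronglyMeasurable (fun y => cesaroMean (fun i => f i y) n) ν := fun n =>
    aestronglyMeasurable_const.mul (Finset.aestronglyMeasurable_fun_sum _ fun i _ => hf i)
  have hdom := tendsto_integral_of_dominated_convergence (fun _ => C) hmeas (integrable_const C)
    (fun n => ae_of_all _ fun y => norm_cesaroMean_le (hbound · y) n) hlim
  simpa only [integral_const, probReal_univ, one_smul, integral_cesaroMean hint] using hdom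

namespace ProbabilityTheory.Kernel

variable {S : Type*} [MeasurableSpace S] (κ : Kernel S S)

instance isMarkovKernel_kernelIter [IsMarkovKernel κ] : ∀ n, IsMarkovKernel (kernelIter κ n)
  | 0 => by rw [kernelIter]; infer_instance
  | n + 1 => by
    rw [kernelIter]
    have := isMarkovKernel_kernelIter n
    infer_instance

lemma kernelIter_succ_apply {A : Set S} (hA : MeasurableSet A) (n : ℕ) (x : S) :
    kernelIter κ (n + 1) x A = ∫⁻ y, kernelIter κ n y A ∂κ x := by
  rw [kernelIter, Kernel.comp_apply' _ _ _ hA]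

lemma toReal_kernelIter_succ_apply [IsMarkovKernel κ] {A : Set S} (hA : MeasurableSet A)
    (n : ℕ) (x : S) :
    (kernelIter κ (n + 1) x A).toReal = ∫ y, (kernelIter κ n y A).toReal ∂κ x := by
  rw [kernelIter_succ_apply κ hA, integral_toReal (Kernel.measurable_coe _ hA).aemeasurable
    (ae_of_all _ fun y => measure_lt_top _ _)]

lemma norm_toReal_kernelIter_apply_le [IsMarkovKernel κ] (A : Set S) (n : ℕ) (y : S) :
    ‖(kernelIter κ n y A).toReal‖ ≤ 1 := by
  rw [Real.norm_of_nonneg ENNReal.toReal_nonneg]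
  exact measureReal_le_one

end ProbabilityTheory.Kernel

open ProbabilityTheory.Kernel in
theorem cesaro_convergence_everywhere_of_ae_general
    {S : Type*} [MeasurableSpace S] (κ : Kernel S S) [IsMarkovKernel κ]
    (μ : Measure S) [IsProbabilityMeasure μ]
    (A : Set S) (hA : MeasurableSet A)
    (N : Set S)
    (hκN : ∀ x : S, κ x N = 0)
    (hae : ∀ y ∉ N, Tendsto
      (fun n : ℕ => (1 / (n : ℝ)) * ∑ i ∈ Finset.range n, (kernelIter κ i y A).toReal)
      atTop (nhds (μ A).toReal)) :
    (∀ x : S, Tendsto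
      (fun n : ℕ => (1 / (n : ℝ)) * ∑ i ∈ Finset.range n, (kernelIter κ (i + 1) x A).toReal)
      atTop (nhds (μ A).toReal)) ∧
    (0 < μ A → ∀ x : S, ∑' n : ℕ, kernelIter κ (n + 1) x A = ⊤) := by
  have hconv : ∀ x : S, Tendsto (cesaroMean fun i => (kernelIter κ (i + 1) x A).toReal)
      atTop (nhds (μ A).toReal) := by
    intro x
    simp only [toReal_kernelIter_succ_apply κ hA]
    refine tendsto_cesaroMean_integral_of_ae
      (fun i => (Kernel.measurable_coe _ hA).ennreal_toReal.aestronglyMeasurable)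
      (norm_toReal_kernelIter_apply_le κ A) ?_
    filter_upwards [measure_eq_zero_iff_ae_notMem.mp (hκN x)] with y hy using hae y hy
  refine ⟨hconv, fun hpos x => ENNReal.tsum_eq_top_of_tendsto_cesaroMean (hconv x) ?_⟩
  exact ENNReal.toReal_ne_zero.mpr ⟨hpos.ne', measure_ne_top μ A⟩

/-- Upgrading almost-everywhere Cesàro convergence to convergence from every starting
point: if `κ(x, N) = 0` for all `x`, `μ(N) = 0`, and for every `y ∉ N` the Cesàro
averages `(1/n) ∑_{i=0}^{n-1} κ^i(y, A)` converge to `μ(A)`, then for every `x ∈ S`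
the averages `(1/n) ∑_{i=1}^{n} κ^i(x, A)` converge to `μ(A)`; in particular if
`μ(A) > 0` then `∑_{n≥1} κⁿ(x, A) = ∞` for every `x`. -/
theorem cesaro_convergence_everywhere_of_ae
    {S : Type*} [MeasurableSpace S] (κ : Kernel S S) [IsMarkovKernel κ]
    (μ : Measure S) [IsProbabilityMeasure μ]
    (A : Set S) (hA : MeasurableSet A)
    (N : Set S) (hN : MeasurableSet N) (hμN : μ N = 0)
    (hκN : ∀ x : S, κ x N = 0)
    (hae : ∀ y ∉ N, Tendsto
      (fun n : ℕ => (1 / (n : ℝ)) * ∑ i ∈ Finset.range n, (kernelIter κ i y A).toReal)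
      atTop (nhds (μ A).toReal)) :
    (∀ x : S, Tendsto
      (fun n : ℕ => (1 / (n : ℝ)) * ∑ i ∈ Finset.range n, (kernelIter κ (i + 1) x A).toReal)
      atTop (nhds (μ A).toReal)) ∧
    (0 < μ A → ∀ x : S, ∑' n : ℕ, kernelIter κ (n + 1) x A = ⊤) :=
  cesaro_convergence_everywhere_of_ae_general κ μ A hA N hκN hae
end

section
/- Let (X_i)_{i ≥ 1} be i.i.d. real random variables and set S_n = ∑_{i=1}^n X_i. For s > 0 define the first passage time T(s) = inf{ n ≥ 1 : s + S_n ≤ 0 } (with inf ∅ = ∞). Then for every λ ≥ 0, every s₀ > 0 and every integer k ≥ 1, E[ e^{λ T(k s₀)} ] ≤ ( E[ e^{λ T(s₀)} ] )^k, with the convention e^{λ·∞} = ∞. -/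
/-!
If the walk started at `a` first passes below `0` at time `T(a) = n`, then the walk started at
`a + b` has by then gone down by `a` and still has to go down by `b`; the walk restarted at
time `n` does so within its own passage time `T'(b)`, so `T(a + b) ≤ T(a) + T'(b)` pathwise.
The event `{T(a) = n}` depends only on the first `n` increments, while `T'(b)` depends only on
the later ones and, the increments being i.i.d., has the law of `T(b)`. Integrating
`e^{λ T(a + b)} ≤ e^{λ T(a)} e^{λ T'(b)}` over each event `{T(a) = n}` (and trivially over
`{T(a) = ∞}`) gives `E[e^{λ T(a + b)}] ≤ E[e^{λ T(a)}] E[e^{λ T(b)}]`, and induction on `k`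
finishes.
-/

open MeasureTheory ProbabilityTheory
open scoped ENNReal Classical

/-- `exp(λ T(s))` (valued in `ℝ≥0∞`, with `e^{λ·∞} = ∞`), where
`T(s) = inf{ n ≥ 1 : s + S_n ≤ 0 }` is the first passage time below `0` of the walk
`S` started from level `s` (`T(s) = ∞` if the walk never passes below `0`). -/
noncomputable def expPassage {Ω : Type*} (lam : ℝ) (S : ℕ → Ω → ℝ) (s : ℝ)
    (ω : Ω) : ℝ≥0∞ :=
  if h : ∃ n : ℕ, 1 ≤ n ∧ s + S n ω ≤ 0
  then ENNReal.ofReal (Real.exp (lam * (Nat.find h : ℝ)))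
  else ⊤

open Finset

lemma lintegral_eq_tsum_setLIntegral_fiber {α β : Type*} [MeasurableSpace α] [MeasurableSpace β]
    [Countable β] [MeasurableSingletonClass β] {μ : Measure α} {T : α → β} (hT : Measurable T)
    (f : α → ℝ≥0∞) :
    ∫⁻ a, f a ∂μ = ∑' b, ∫⁻ a in T ⁻¹' {b}, f a ∂μ := by
  rw [← lintegral_iUnion (fun b => hT (measurableSet_singleton b)) (pairwise_disjoint_fiber T),
    ← Set.preimage_iUnion, Set.iUnion_of_singleton, Set.preimage_univ, Measure.restrict_univ]

namespace RandomWalk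

noncomputable def expENat (lam : ℝ) (t : ℕ∞) : ℝ≥0∞ :=
  t.recTopCoe ⊤ fun n => ENNReal.ofReal (Real.exp (lam * n))

@[simp] lemma expENat_top (lam : ℝ) : expENat lam ⊤ = ⊤ := rfl

@[simp] lemma expENat_coe (lam : ℝ) (n : ℕ) :
    expENat lam n = ENNReal.ofReal (Real.exp (lam * n)) := rfl

lemma expENat_mono {lam : ℝ} (hlam : 0 ≤ lam) : Monotone (expENat lam) := by
  intro s t hst
  induction t using ENat.recTopCoe with
  | top => exact le_top
  | coe m =>
    lift s to ℕ using ne_top_of_le_ne_top (ENat.natCast_ne_top m) hst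
    simp only [expENat_coe]
    gcongr
    exact_mod_cast hst

lemma one_le_expENat {lam : ℝ} (hlam : 0 ≤ lam) (t : ℕ∞) : 1 ≤ expENat lam t := by
  have h := expENat_mono hlam (zero_le (a := t))
  rwa [← Nat.cast_zero (R := ℕ∞), expENat_coe, Nat.cast_zero, mul_zero, Real.exp_zero,
    ENNReal.ofReal_one] at h

lemma expENat_coe_add (lam : ℝ) (n : ℕ) (t : ℕ∞) :
    expENat lam (n + t) = expENat lam n * expENat lam t := by
  induction t using ENat.recTopCoe with
  | top => simp [ENNReal.mul_top (ENNReal.ofReal_pos.2 (Real.exp_pos _)).ne']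
  | coe m =>
    rw [← Nat.cast_add, expENat_coe, expENat_coe, expENat_coe, Nat.cast_add, mul_add,
      Real.exp_add, ENNReal.ofReal_mul (Real.exp_nonneg _)]

variable {Ω : Type*}

def partialSum (Y : ℕ → Ω → ℝ) (n : ℕ) (ω : Ω) : ℝ := ∑ i ∈ range n, Y i ω

lemma partialSum_add (Y : ℕ → Ω → ℝ) (n m : ℕ) (ω : Ω) :
    partialSum Y (n + m) ω = partialSum Y n ω + partialSum (fun i => Y (n + i)) m ω :=
  sum_range_add _ n m

lemma measurable_partialSum {m : MeasurableSpace Ω} {Y : ℕ → Ω → ℝ} {n : ℕ}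
    (hY : ∀ i < n, Measurable[m] (Y i)) : Measurable[m] (partialSum Y n) :=
  Finset.measurable_sum _ fun i hi => hY i (mem_range.1 hi)

noncomputable def passageTime (S : ℕ → Ω → ℝ) (s : ℝ) (ω : Ω) : ℕ∞ :=
  if h : ∃ n : ℕ, 1 ≤ n ∧ s + S n ω ≤ 0 then Nat.find h else ⊤

lemma expPassage_eq_expENat_passageTime (lam : ℝ) (S : ℕ → Ω → ℝ) (s : ℝ) (ω : Ω) :
    expPassage lam S s ω = expENat lam (passageTime S s ω) := by
  unfold expPassage passageTime
  split_ifs <;> rfl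

variable {S : ℕ → Ω → ℝ} {s : ℝ} {ω : Ω}

lemma passageTime_eq_coe_iff {n : ℕ} :
    passageTime S s ω = n ↔ (1 ≤ n ∧ s + S n ω ≤ 0) ∧ ∀ m < n, ¬(1 ≤ m ∧ s + S m ω ≤ 0) := by
  unfold passageTime
  split_ifs with h
  · rw [Nat.cast_inj, Nat.find_eq_iff]
  · simp only [ENat.top_ne_natCast, false_iff]
    exact fun hn => h ⟨n, hn.1⟩

lemma passageTime_le {n : ℕ} (hn : 1 ≤ n) (hs : s + S n ω ≤ 0) : passageTime S s ω ≤ n := by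
  have h : ∃ n : ℕ, 1 ≤ n ∧ s + S n ω ≤ 0 := ⟨n, hn, hs⟩
  rw [passageTime, dif_pos h, Nat.cast_le]
  exact Nat.find_min' h ⟨hn, hs⟩

lemma measurableSet_passageTime_eq {m : MeasurableSpace Ω} {n : ℕ}
    (hS : ∀ k ≤ n, Measurable[m] (S k)) (s : ℝ) :
    MeasurableSet[m] (passageTime S s ⁻¹' {(n : ℕ∞)}) := by
  have hpass : ∀ k ≤ n, MeasurableSet[m] {ω | 1 ≤ k ∧ s + S k ω ≤ 0} := fun k hk =>
    (MeasurableSet.const _).inter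
      (measurableSet_le (measurable_const.add (hS k hk)) measurable_const)
  simp only [Set.preimage, Set.mem_singleton_iff, passageTime_eq_coe_iff, Set.ofPred_and,
    Set.ofPred_forall]
  exact (hpass n le_rfl).inter (.iInter fun k => .iInter fun hk => (hpass k hk.le).compl)

lemma measurable_passageTime {m : MeasurableSpace Ω} (hS : ∀ k, Measurable[m] (S k)) (s : ℝ) :
    Measurable[m] (passageTime S s) := by
  have hcoe : ∀ n : ℕ, MeasurableSet[m] (passageTime S s ⁻¹' {(n : ℕ∞)}) := fun n =>
    measurableSet_passageTime_eq (fun k _ => hS k) s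
  refine measurable_to_countable' fun t => ?_
  induction t using ENat.recTopCoe with
  | top =>
    have : passageTime S s ⁻¹' {⊤} = (⋃ n : ℕ, passageTime S s ⁻¹' {(n : ℕ∞)})ᶜ := by
      ext ω
      simp [ENat.eq_top_iff_forall_ne, eq_comm]
    rw [this]
    exact (MeasurableSet.iUnion hcoe).compl
  | coe n => exact hcoe n

lemma measurable_expPassage {m : MeasurableSpace Ω} (hS : ∀ k, Measurable[m] (S k))
    (lam s : ℝ) : Measurable[m] (expPassage lam S s) := by
  simp only [funext (expPassage_eq_expENat_passageTime lam S s)]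
  exact Measurable.of_discrete.comp (measurable_passageTime hS s)

lemma passageTime_add_le {Y : ℕ → Ω → ℝ} {a b : ℝ} {n : ℕ}
    (hn : passageTime (partialSum Y) a ω = n) :
    passageTime (partialSum Y) (a + b) ω ≤ n + passageTime (partialSum fun i => Y (n + i)) b ω := by
  obtain ⟨⟨hn1, ha⟩, -⟩ := passageTime_eq_coe_iff.1 hn
  generalize ht : passageTime (partialSum fun i => Y (n + i)) b ω = t
  induction t using ENat.recTopCoe with
  | top => simp
  | coe m =>
    obtain ⟨⟨-, hb⟩, -⟩ := passageTime_eq_coe_iff.1 ht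
    rw [← Nat.cast_add]
    refine passageTime_le (by omega) ?_
    rw [partialSum_add]
    linarith

lemma one_le_lintegral_expPassage {m : MeasurableSpace Ω} {P : Measure Ω}
    [IsProbabilityMeasure P] {lam : ℝ} (hlam : 0 ≤ lam) (S : ℕ → Ω → ℝ) (s : ℝ) :
    1 ≤ ∫⁻ ω, expPassage lam S s ω ∂P :=
  calc (1 : ℝ≥0∞) = ∫⁻ _, 1 ∂P := by simp
    _ ≤ ∫⁻ ω, expPassage lam S s ω ∂P := lintegral_mono fun ω => by
        rw [expPassage_eq_expENat_passageTime]
        exact one_le_expENat hlam _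

section IID

variable {mΩ : MeasurableSpace Ω} {P : Measure Ω} {Y : ℕ → Ω → ℝ}

lemma map_shift_eq_map (hmeas : ∀ i, Measurable (Y i)) (hY : iIndepFun Y P)
    (hident : ∀ i, P.map (Y i) = P.map (Y 0)) (n : ℕ) :
    P.map (fun ω i => Y (n + i) ω) = P.map (fun ω i => Y i ω) := by
  rw [(hY.precomp (add_right_injective n)).map_fun_eq_infinitePi_map (fun i => hmeas _),
    hY.map_fun_eq_infinitePi_map hmeas]
  simp only [hident]

lemma lintegral_expPassage_shift (hmeas : ∀ i, Measurable (Y i)) (hY : iIndepFun Y P)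
    (hident : ∀ i, P.map (Y i) = P.map (Y 0)) (lam s : ℝ) (n : ℕ) :
    ∫⁻ ω, expPassage lam (partialSum fun i => Y (n + i)) s ω ∂P
      = ∫⁻ ω, expPassage lam (partialSum Y) s ω ∂P := by
  set F := expPassage lam (partialSum fun i (x : ℕ → ℝ) => x i) s
  have hF : Measurable F :=
    measurable_expPassage (fun k => measurable_partialSum fun i _ => measurable_pi_apply i) lam s
  calc ∫⁻ ω, expPassage lam (partialSum fun i => Y (n + i)) s ω ∂P
      = ∫⁻ x, F x ∂P.map (fun ω i => Y (n + i) ω) :=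
        (lintegral_map hF (measurable_pi_lambda _ fun i => hmeas (n + i))).symm
    _ = ∫⁻ x, F x ∂P.map (fun ω i => Y i ω) := by rw [map_shift_eq_map hmeas hY hident]
    _ = ∫⁻ ω, expPassage lam (partialSum Y) s ω ∂P :=
        lintegral_map hF (measurable_pi_lambda _ hmeas)

lemma indep_iSup_lt_iSup_ge (hmeas : ∀ i, Measurable (Y i)) (hY : iIndepFun Y P) (n : ℕ) :
    Indep (⨆ i ∈ Set.Iio n, MeasurableSpace.comap (Y i) inferInstance)
      (⨆ i ∈ Set.Ici n, MeasurableSpace.comap (Y i) inferInstance) P :=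
  indep_iSup_of_disjoint (fun i => (hmeas i).comap_le) hY.iIndep (Set.Iio_disjoint_Ici le_rfl)

lemma setLIntegral_passageTime_eq_expPassage_shift (hmeas : ∀ i, Measurable (Y i))
    (hY : iIndepFun Y P) (hident : ∀ i, P.map (Y i) = P.map (Y 0)) (lam a b : ℝ) (n : ℕ) :
    ∫⁻ ω in passageTime (partialSum Y) a ⁻¹' {(n : ℕ∞)},
        expPassage lam (partialSum fun i => Y (n + i)) b ω ∂P
      = P (passageTime (partialSum Y) a ⁻¹' {(n : ℕ∞)})
          * ∫⁻ ω, expPassage lam (partialSum Y) b ω ∂P := by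
  set σY : ℕ → MeasurableSpace Ω := fun i => MeasurableSpace.comap (Y i) inferInstance
  set past := ⨆ i ∈ Set.Iio n, σY i
  set future := ⨆ i ∈ Set.Ici n, σY i
  have hpast : past ≤ mΩ := iSup₂_le fun i _ => (hmeas i).comap_le
  have hfuture : future ≤ mΩ := iSup₂_le fun i _ => (hmeas i).comap_le
  have hE : MeasurableSet[past] (passageTime (partialSum Y) a ⁻¹' {(n : ℕ∞)}) :=
    measurableSet_passageTime_eq (fun k hk => measurable_partialSum fun i hi =>
      Measurable.of_comap_le (le_iSup₂ (f := fun i (_ : i ∈ Set.Iio n) => σY i) i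
        (lt_of_lt_of_le hi hk))) a
  have hg : Measurable[future] (expPassage lam (partialSum fun i => Y (n + i)) b) :=
    measurable_expPassage (fun k => measurable_partialSum fun i _ =>
      Measurable.of_comap_le (le_iSup₂ (f := fun i (_ : i ∈ Set.Ici n) => σY i) (n + i)
        (Nat.le_add_right n i))) lam b
  rw [← lintegral_indicator (hpast _ hE), ← lintegral_indicator_one (hpast _ hE),
    ← lintegral_expPassage_shift hmeas hY hident lam b n,
    ← lintegral_mul_eq_lintegral_mul_lintegral_of_independent_measurableSpace hpast hfuture
      (indep_iSup_lt_iSup_ge hmeas hY n) ((@measurable_one ℝ≥0∞ Ω _ past _).indicator hE) hg]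
  simp only [← Set.indicator_mul_left, Pi.one_apply, one_mul]

lemma setLIntegral_expPassage_add_le (hmeas : ∀ i, Measurable (Y i)) (hY : iIndepFun Y P)
    (hident : ∀ i, P.map (Y i) = P.map (Y 0)) {lam : ℝ} (hlam : 0 ≤ lam) (a b : ℝ) (t : ℕ∞) :
    ∫⁻ ω in passageTime (partialSum Y) a ⁻¹' {t}, expPassage lam (partialSum Y) (a + b) ω ∂P
      ≤ (∫⁻ ω in passageTime (partialSum Y) a ⁻¹' {t}, expPassage lam (partialSum Y) a ω ∂P)
        * ∫⁻ ω, expPassage lam (partialSum Y) b ω ∂P := by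
  have hS : ∀ k, Measurable (partialSum Y k) := fun k => measurable_partialSum fun i _ => hmeas i
  have hfiber : MeasurableSet (passageTime (partialSum Y) a ⁻¹' {t}) :=
    measurable_passageTime hS a (measurableSet_singleton t)
  have hfa : ∀ ω ∈ passageTime (partialSum Y) a ⁻¹' {t},
      expPassage lam (partialSum Y) a ω = expENat lam t := fun ω hω => by
    rw [expPassage_eq_expENat_passageTime, Set.mem_singleton_iff.1 (Set.mem_preimage.1 hω)]
  induction t using ENat.recTopCoe with
  | top =>
    have := hY.isProbabilityMeasure
    calc ∫⁻ ω in passageTime (partialSum Y) a ⁻¹' {⊤},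
          expPassage lam (partialSum Y) (a + b) ω ∂P
        ≤ ∫⁻ ω in passageTime (partialSum Y) a ⁻¹' {⊤}, expENat lam ⊤ ∂P :=
          lintegral_mono fun _ => le_top
      _ = ∫⁻ ω in passageTime (partialSum Y) a ⁻¹' {⊤}, expPassage lam (partialSum Y) a ω ∂P :=
          (setLIntegral_congr_fun hfiber hfa).symm
      _ ≤ _ := le_mul_of_one_le_right' (one_le_lintegral_expPassage hlam _ b)
  | coe n =>
    calc ∫⁻ ω in passageTime (partialSum Y) a ⁻¹' {(n : ℕ∞)},
          expPassage lam (partialSum Y) (a + b) ω ∂P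
        ≤ ∫⁻ ω in passageTime (partialSum Y) a ⁻¹' {(n : ℕ∞)},
          expENat lam n * expPassage lam (partialSum fun i => Y (n + i)) b ω ∂P :=
          setLIntegral_mono' hfiber fun ω hω => by
            rw [expPassage_eq_expENat_passageTime, expPassage_eq_expENat_passageTime,
              ← expENat_coe_add]
            exact expENat_mono hlam (passageTime_add_le hω)
      _ = expENat lam n * (P (passageTime (partialSum Y) a ⁻¹' {(n : ℕ∞)})
            * ∫⁻ ω, expPassage lam (partialSum Y) b ω ∂P) := by
          rw [lintegral_const_mul _ (measurable_expPassage
              (fun k => measurable_partialSum fun i _ => hmeas (n + i)) lam b),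
            setLIntegral_passageTime_eq_expPassage_shift hmeas hY hident]
      _ = _ := by rw [setLIntegral_congr_fun hfiber hfa, setLIntegral_const, mul_assoc]

theorem lintegral_expPassage_add_le (hmeas : ∀ i, Measurable (Y i)) (hY : iIndepFun Y P)
    (hident : ∀ i, P.map (Y i) = P.map (Y 0)) {lam : ℝ} (hlam : 0 ≤ lam) (a b : ℝ) :
    ∫⁻ ω, expPassage lam (partialSum Y) (a + b) ω ∂P
      ≤ (∫⁻ ω, expPassage lam (partialSum Y) a ω ∂P)
        * ∫⁻ ω, expPassage lam (partialSum Y) b ω ∂P := by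
  have hT : Measurable (passageTime (partialSum Y) a) :=
    measurable_passageTime (fun k => measurable_partialSum fun i _ => hmeas i) a
  rw [lintegral_eq_tsum_setLIntegral_fiber hT, lintegral_eq_tsum_setLIntegral_fiber hT,
    ← ENNReal.tsum_mul_right]
  exact ENNReal.tsum_le_tsum fun t => setLIntegral_expPassage_add_le hmeas hY hident hlam a b t

end IID

end RandomWalk

theorem first_passage_time_exp_moment_submultiplicative_general
    {Ω : Type*} [MeasurableSpace Ω] (P : Measure Ω)
    (X : ℕ → Ω → ℝ) (hmeas : ∀ i, Measurable (X i))
    (hindep : iIndepFun X P)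
    (hident : ∀ i j : ℕ, Measure.map (X i) P = Measure.map (X j) P)
    (lam : ℝ) (hlam : 0 ≤ lam) (s₀ : ℝ) (k : ℕ) (hk : 1 ≤ k) :
    ∫⁻ ω, expPassage lam
        (fun n ω => ∑ i ∈ Finset.range n, X (i + 1) ω) ((k : ℝ) * s₀) ω ∂P
      ≤ (∫⁻ ω, expPassage lam
          (fun n ω => ∑ i ∈ Finset.range n, X (i + 1) ω) s₀ ω ∂P) ^ k := by
  set Y : ℕ → Ω → ℝ := fun i => X (i + 1)
  have hY : iIndepFun Y P := hindep.precomp (add_left_injective 1)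
  set I := ∫⁻ ω, expPassage lam (RandomWalk.partialSum Y) s₀ ω ∂P
  change ∫⁻ ω, expPassage lam (RandomWalk.partialSum Y) ((k : ℝ) * s₀) ω ∂P ≤ I ^ k
  induction k, hk using Nat.le_induction with
  | base => simp [I]
  | succ k _ ih =>
    calc ∫⁻ ω, expPassage lam (RandomWalk.partialSum Y) (((k + 1 : ℕ) : ℝ) * s₀) ω ∂P
        = ∫⁻ ω, expPassage lam (RandomWalk.partialSum Y) (k * s₀ + s₀) ω ∂P := by
          rw [Nat.cast_succ, add_one_mul]
      _ ≤ (∫⁻ ω, expPassage lam (RandomWalk.partialSum Y) (k * s₀) ω ∂P) * I :=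
          RandomWalk.lintegral_expPassage_add_le (fun i => hmeas _) hY (fun i => hident _ _)
            hlam _ _
      _ ≤ I ^ k * I := by gcongr
      _ = I ^ (k + 1) := (pow_succ I k).symm

/-- Submultiplicativity in the starting level of exponential moments of first passage
times of a random walk with i.i.d. increments:
`E[e^{λ T(k s₀)}] ≤ (E[e^{λ T(s₀)}])^k` for `λ ≥ 0`, `s₀ > 0`, `k ≥ 1`. -/
theorem first_passage_time_exp_moment_submultiplicative
    {Ω : Type*} [MeasurableSpace Ω] (P : Measure Ω) [IsProbabilityMeasure P]
    (X : ℕ → Ω → ℝ) (hmeas : ∀ i, Measurable (X i))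
    (hindep : iIndepFun X P)
    (hident : ∀ i j : ℕ, Measure.map (X i) P = Measure.map (X j) P)
    (lam : ℝ) (hlam : 0 ≤ lam) (s₀ : ℝ) (hs₀ : 0 < s₀) (k : ℕ) (hk : 1 ≤ k) :
    ∫⁻ ω, expPassage lam
        (fun n ω => ∑ i ∈ Finset.range n, X (i + 1) ω) ((k : ℝ) * s₀) ω ∂P
      ≤ (∫⁻ ω, expPassage lam
          (fun n ω => ∑ i ∈ Finset.range n, X (i + 1) ω) s₀ ω ∂P) ^ k :=
  first_passage_time_exp_moment_submultiplicative_general P X hmeas hindep hident lam hlam s₀ k hk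
end

section
/- Let (X_i)_{i ≥ 1} be i.i.d. real random variables with partial sums S_n = ∑_{i=1}^n X_i, and for s > 0 let T(s) = inf{ n ≥ 1 : s + S_n ≤ 0 } (inf ∅ = ∞). Suppose there exist s₀ > 0 and λ̄ > 0 with E[e^{λ̄ T(s₀)}] < ∞. Let ξ be a nonnegative random variable independent of (X_i)_{i≥1} whose distribution has exponentially decaying tails: there exist c₀ > 0 and c₁ ∈ (0,1) with P(ξ > t) ≤ c₀ c₁^t for all t ≥ 0. Then there exists λ' > 0 such that E[ e^{λ' T(ξ)} ] < ∞, where T(ξ) = inf{ n ≥ 1 : ξ + S_n ≤ 0 }. -/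
open MeasureTheory ProbabilityTheory
open scoped ENNReal Classical

/-!
Write `m(s) = E[e^{λ T(s)}]`. At time `T(s)` the walk started at `s + s'` is below `s'`, and by
the strong Markov property the increments after `T(s)` form a fresh copy of the walk, independent
of `T(s)`. Hence `T(s + s') ≤ T(s) + T'(s')` and `m(s + s') ≤ m(s) m(s')`, so `m(n s₀) ≤ m(s₀)ⁿ`.
By dominated convergence `m(s₀) → 1` as `λ ↓ 0`, so for small `λ > 0` the growth `m(s₀)ⁿ` is
beaten by the geometric tail `P(ξ ≥ n s₀) ≤ c₀ (c₁^{s₀})ⁿ⁻¹`; conditioning on the independent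
level `ξ`, rounded up to a multiple of `s₀`, gives `E[e^{λ T(ξ)}] < ∞`.
-/

open Filter Topology

lemma tsum_indicator_one_mul {α : Type*} {D : ℕ → Set α} {a : α} {k : ℕ}
    (hD : ∀ n, a ∈ D n ↔ k = n) (H : ℕ → ℝ≥0∞) :
    ∑' n, (D n).indicator 1 a * H n = H k := by
  rw [tsum_eq_single k]
  · simp [Set.indicator_of_mem ((hD k).2 rfl)]
  · intro n hn
    simp [Set.indicator_of_notMem (fun h => hn ((hD n).1 h).symm)]

theorem lintegral_comp_eq_tsum_of_indepFun {Ω β : Type*} [MeasurableSpace Ω] [MeasurableSpace β]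
    {P : Measure Ω} {N : Ω → ℕ} {Y : Ω → β} (hN : Measurable N) (hY : Measurable Y)
    (hNY : IndepFun N Y P) {g : ℕ → β → ℝ≥0∞} (hg : ∀ n, Measurable (g n)) :
    ∫⁻ ω, g (N ω) (Y ω) ∂P = ∑' n, P (N ⁻¹' {n}) * ∫⁻ ω, g n (Y ω) ∂P := by
  have hind : ∀ n, Measurable (({n} : Set ℕ).indicator (1 : ℕ → ℝ≥0∞)) := fun n =>
    measurable_one.indicator (measurableSet_singleton n)
  have hprob : ∀ n, ∫⁻ ω, ({n} : Set ℕ).indicator 1 (N ω) ∂P = P (N ⁻¹' {n}) := fun n =>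
    lintegral_indicator_one (hN (measurableSet_singleton n))
  calc ∫⁻ ω, g (N ω) (Y ω) ∂P
      = ∫⁻ ω, ∑' n, ({n} : Set ℕ).indicator 1 (N ω) * g n (Y ω) ∂P :=
        lintegral_congr fun ω =>
          (tsum_indicator_one_mul (fun _ => Set.mem_singleton_iff) fun n => g n (Y ω)).symm
    _ = ∑' n, P (N ⁻¹' {n}) * ∫⁻ ω, g n (Y ω) ∂P := by
        refine (lintegral_tsum fun n => (((hind n).comp hN).mul
          ((hg n).comp hY)).aemeasurable).trans (tsum_congr fun n => ?_)
        rw [← hprob]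
        exact lintegral_mul_eq_lintegral_mul_lintegral_of_indepFun''
          ((hind n).comp hN).aemeasurable ((hg n).comp hY).aemeasurable (hNY.comp (hind n) (hg n))

lemma ENNReal.tsum_mul_pow_lt_top {p : ℕ → ℝ≥0∞} {C β ρ : ℝ≥0∞} (hp : ∀ n, p n ≤ C * β ^ n)
    (hC : C ≠ ⊤) (h : β * ρ < 1) : ∑' n, p n * ρ ^ n < ⊤ :=
  calc ∑' n, p n * ρ ^ n ≤ ∑' n, C * (β * ρ) ^ n := ENNReal.tsum_le_tsum fun n => by
        rw [mul_pow, ← mul_assoc]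
        gcongr
        exact hp n
    _ = C * (1 - β * ρ)⁻¹ := by rw [ENNReal.tsum_mul_left, ENNReal.tsum_geometric]
    _ < ⊤ := ENNReal.mul_lt_top hC.lt_top (ENNReal.inv_lt_top.2 (tsub_pos_of_lt h))

lemma measure_floor_div_eq_le {Ω : Type*} [MeasurableSpace Ω] {P : Measure Ω}
    [IsProbabilityMeasure P] {ξ : Ω → ℝ} {s₀ c₀ c₁ : ℝ} (hs₀ : 0 < s₀) (hc₁ : 0 < c₁)
    (htail : ∀ t : ℝ, 0 ≤ t → P {ω | t < ξ ω} ≤ ENNReal.ofReal (c₀ * c₁ ^ t)) (n : ℕ) :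
    P {ω | ⌊ξ ω / s₀⌋₊ = n} ≤
      ENNReal.ofReal (max 1 (c₀ / c₁ ^ s₀)) * ENNReal.ofReal (c₁ ^ s₀) ^ n := by
  have hβ : 0 < c₁ ^ s₀ := Real.rpow_pos_of_pos hc₁ s₀
  rw [← ENNReal.ofReal_pow hβ.le, ← ENNReal.ofReal_mul (by positivity)]
  cases n with
  | zero => exact prob_le_one.trans (ENNReal.one_le_ofReal.2 (by simp))
  | succ n =>
    have hsub : {ω | ⌊ξ ω / s₀⌋₊ = n + 1} ⊆ {ω | n * s₀ < ξ ω} := fun ω hω => by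
      have hle := (Nat.le_floor_iff' n.succ_ne_zero).1 hω.ge
      rw [le_div_iff₀ hs₀] at hle
      push_cast at hle
      show (n : ℝ) * s₀ < ξ ω
      linarith
    refine (measure_mono hsub).trans
      ((htail _ (by positivity)).trans (ENNReal.ofReal_le_ofReal ?_))
    rw [mul_comm (n : ℝ) s₀, Real.rpow_mul_natCast hc₁.le, pow_succ', ← mul_assoc]
    refine mul_le_mul_of_nonneg_right ?_ (by positivity)
    calc c₀ = c₀ / c₁ ^ s₀ * c₁ ^ s₀ := by field_simp
      _ ≤ _ := by gcongr; exact le_max_right _ _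

lemma map_increments_eq_infinitePi {Ω : Type*} [MeasurableSpace Ω] {P : Measure Ω}
    {X : ℕ → Ω → ℝ} (hmeas : ∀ i, Measurable (X i)) (hindep : iIndepFun X P)
    (hident : ∀ i j : ℕ, Measure.map (X i) P = Measure.map (X j) P) :
    P.map (fun ω i => X (i + 1) ω) = Measure.infinitePi fun _ => P.map (X 1) := by
  rw [(hindep.precomp Nat.succ_injective).map_fun_eq_infinitePi_map fun i => hmeas _]
  simp_rw [hident _ 1]

namespace RandomWalk

def walk (n : ℕ) (y : ℕ → ℝ) : ℝ := ∑ i ∈ Finset.range n, y i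

def shift (t : ℕ) (y : ℕ → ℝ) : ℕ → ℝ := fun i => y (t + i)

def HitsAt (s : ℝ) (n : ℕ) (y : ℕ → ℝ) : Prop := 1 ≤ n ∧ s + walk n y ≤ 0

def Hits (s : ℝ) (y : ℕ → ℝ) : Prop := ∃ n, HitsAt s n y

noncomputable def hitTime (s : ℝ) (y : ℕ → ℝ) : ℕ := if h : Hits s y then Nat.find h else 0

section Path

variable {lam s s' : ℝ} {y : ℕ → ℝ} {n t : ℕ}

lemma walk_add (t m : ℕ) (y : ℕ → ℝ) : walk (t + m) y = walk t y + walk m (shift t y) :=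
  Finset.sum_range_add _ _ _

lemma hitTime_spec (h : Hits s y) : HitsAt s (hitTime s y) y := by
  rw [hitTime, dif_pos h]
  exact Nat.find_spec h

lemma hitTime_le (hn : HitsAt s n y) : hitTime s y ≤ n := by
  rw [hitTime, dif_pos ⟨n, hn⟩]
  exact Nat.find_min' _ hn

lemma hits_and_hitTime_eq_iff :
    Hits s y ∧ hitTime s y = t ↔ HitsAt s t y ∧ ∀ m < t, ¬HitsAt s m y := by
  refine ⟨fun ⟨h, ht⟩ => ?_, fun ht => ⟨⟨t, ht.1⟩, ?_⟩⟩
  · rw [hitTime, dif_pos h] at ht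
    exact (Nat.find_eq_iff h).1 ht
  · rw [hitTime, dif_pos ⟨t, ht.1⟩]
    exact (Nat.find_eq_iff _).2 ht

lemma expPassage_of_hits (h : Hits s y) :
    expPassage lam walk s y = ENNReal.ofReal (Real.exp (lam * hitTime s y)) := by
  rw [hitTime, dif_pos h, expPassage, dif_pos (show ∃ n, 1 ≤ n ∧ s + walk n y ≤ 0 from h)]
  congr

lemma expPassage_of_not_hits (h : ¬Hits s y) : expPassage lam walk s y = ⊤ :=
  dif_neg h

lemma expPassage_lt_top_iff : expPassage lam walk s y < ⊤ ↔ Hits s y := by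
  by_cases h : Hits s y
  · simp [expPassage_of_hits h, h]
  · simp [expPassage_of_not_hits h, h]

lemma one_le_expPassage (hlam : 0 ≤ lam) : 1 ≤ expPassage lam walk s y := by
  by_cases h : Hits s y
  · rw [expPassage_of_hits h]
    exact ENNReal.one_le_ofReal.2 (Real.one_le_exp (by positivity))
  · simp [expPassage_of_not_hits h]

lemma monotone_expPassage {Ω : Type*} (S : ℕ → Ω → ℝ) (s : ℝ) (ω : Ω) :
    Monotone fun lam => expPassage lam S s ω := by
  intro a b hab
  unfold expPassage
  split
  · exact ENNReal.ofReal_le_ofReal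
      (Real.exp_le_exp.2 (mul_le_mul_of_nonneg_right hab (Nat.cast_nonneg _)))
  · exact le_rfl

lemma expPassage_le_of_hitsAt (hlam : 0 ≤ lam) (hn : HitsAt s n y) :
    expPassage lam walk s y ≤ ENNReal.ofReal (Real.exp (lam * n)) := by
  rw [expPassage_of_hits ⟨n, hn⟩]
  gcongr
  exact hitTime_le hn

lemma expPassage_mono_level (hlam : 0 ≤ lam) (hs : s ≤ s') :
    expPassage lam walk s y ≤ expPassage lam walk s' y := by
  by_cases h : Hits s' y
  · obtain ⟨h1, h2⟩ := hitTime_spec h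
    rw [expPassage_of_hits h]
    exact expPassage_le_of_hitsAt hlam ⟨h1, by linarith⟩
  · simp [expPassage_of_not_hits h]

lemma expPassage_add_le (hlam : 0 ≤ lam) (s s' : ℝ) (y : ℕ → ℝ) :
    expPassage lam walk (s + s') y ≤
      expPassage lam walk s y * expPassage lam walk s' (shift (hitTime s y) y) := by
  have hne : ∀ s y, expPassage lam walk s y ≠ 0 := fun _ _ =>
    (zero_lt_one.trans_le (one_le_expPassage hlam)).ne'
  by_cases h : Hits s y
  · by_cases h' : Hits s' (shift (hitTime s y) y)
    · obtain ⟨ht, hst⟩ := hitTime_spec h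
      obtain ⟨hm, hsm⟩ := hitTime_spec h'
      rw [expPassage_of_hits h, expPassage_of_hits h', ← ENNReal.ofReal_mul (Real.exp_nonneg _),
        ← Real.exp_add, ← mul_add]
      refine (expPassage_le_of_hitsAt (n := hitTime s y + hitTime s' (shift (hitTime s y) y))
        hlam ⟨by omega, ?_⟩).trans_eq (by push_cast; rfl)
      rw [walk_add]
      linarith
    · rw [expPassage_of_not_hits h', ENNReal.mul_top (hne _ _)]
      exact le_top
  · rw [expPassage_of_not_hits h, ENNReal.top_mul (hne _ _)]
    exact le_top

end Path

section Measurability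

lemma measurable_walk (n : ℕ) : Measurable (walk n) :=
  Finset.measurable_sum _ fun i _ => measurable_pi_apply i

lemma measurableSet_hitsAt {m : MeasurableSpace (ℕ → ℝ)} {s : ℝ} {n : ℕ}
    (hwalk : Measurable[m] (walk n)) : MeasurableSet[m] {y | HitsAt s n y} :=
  (MeasurableSet.const _).inter (measurableSet_le (hwalk.const_add s) measurable_const)

lemma measurableSet_hits (s : ℝ) : MeasurableSet {y | Hits s y} := by
  simp only [Hits, Set.ofPred_exists]
  exact .iUnion fun n => measurableSet_hitsAt (measurable_walk n)

lemma measurableSet_hits_and_hitTime_eq {m : MeasurableSpace (ℕ → ℝ)} {s : ℝ} {t : ℕ}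
    (hwalk : ∀ n ≤ t, Measurable[m] (walk n)) :
    MeasurableSet[m] {y | Hits s y ∧ hitTime s y = t} := by
  simp only [hits_and_hitTime_eq_iff, Set.ofPred_and, Set.ofPred_forall]
  exact (measurableSet_hitsAt (hwalk t le_rfl)).inter
    (.iInter fun k => .iInter fun hk => (measurableSet_hitsAt (hwalk k hk.le)).compl)

lemma measurable_hitTime (s : ℝ) : Measurable (hitTime s) :=
  Measurable.dite (measurable_find (p := fun (y : {y // Hits s y}) n => HitsAt s n y.1)
    (fun y => y.2) fun n => measurable_subtype_coe (measurableSet_hitsAt (measurable_walk n)))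
    measurable_const (measurableSet_hits s)

lemma measurable_expPassage_s8 (lam s : ℝ) : Measurable (expPassage lam walk s) := by
  have : expPassage lam walk s =
      fun y => if Hits s y then ENNReal.ofReal (Real.exp (lam * hitTime s y)) else ⊤ := by
    ext y
    by_cases h : Hits s y
    · simp [h, expPassage_of_hits]
    · simp [h, expPassage_of_not_hits]
  rw [this]
  exact Measurable.ite (measurableSet_hits s) (ENNReal.measurable_ofReal.comp
    (Real.measurable_exp.comp (measurable_const.mul (measurable_from_nat.comp
      (measurable_hitTime s))))) measurable_const

end Measurability

section Moments

variable {μ : Measure (ℕ → ℝ)}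

lemma ae_hits_of_lintegral_expPassage_lt_top {lam s : ℝ}
    (h : ∫⁻ y, expPassage lam walk s y ∂μ < ⊤) : ∀ᵐ y ∂μ, Hits s y :=
  (ae_lt_top (measurable_expPassage_s8 lam s) h.ne).mono fun _ => expPassage_lt_top_iff.1

lemma one_le_lintegral_expPassage_s8 [IsProbabilityMeasure μ] {lam : ℝ} (hlam : 0 ≤ lam) (s : ℝ) :
    1 ≤ ∫⁻ y, expPassage lam walk s y ∂μ := by
  simpa using lintegral_mono (μ := μ) fun y => one_le_expPassage (s := s) (y := y) hlam

theorem exists_pos_lintegral_expPassage_lt [IsProbabilityMeasure μ] {lambar s : ℝ}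
    (hlambar : 0 < lambar) (hmom : ∫⁻ y, expPassage lambar walk s y ∂μ < ⊤) {a : ℝ≥0∞}
    (ha : 1 < a) : ∃ lam, 0 < lam ∧ ∫⁻ y, expPassage lam walk s y ∂μ < a := by
  have hlim : Tendsto (fun lam => ∫⁻ y, expPassage lam walk s y ∂μ) (𝓝[>] 0)
      (𝓝 (∫⁻ _, 1 ∂μ)) := by
    refine tendsto_lintegral_filter_of_dominated_convergence (expPassage lambar walk s)
      (.of_forall fun lam => measurable_expPassage_s8 lam s) ?_ hmom.ne ?_
    · filter_upwards [Ioo_mem_nhdsGT hlambar] with lam hlam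
      exact .of_forall fun y => monotone_expPassage _ _ _ hlam.2.le
    · filter_upwards [ae_hits_of_lintegral_expPassage_lt_top hmom] with y hy
      simp_rw [expPassage_of_hits hy]
      have : Continuous fun lam : ℝ => ENNReal.ofReal (Real.exp (lam * hitTime s y)) :=
        ENNReal.continuous_ofReal.comp (by fun_prop)
      simpa using (this.tendsto 0).mono_left nhdsWithin_le_nhds
  rw [lintegral_const, measure_univ, mul_one] at hlim
  obtain ⟨lam, hlt, hpos⟩ := ((hlim.eventually (gt_mem_nhds ha)).and self_mem_nhdsWithin).exists
  exact ⟨lam, hpos, hlt⟩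

lemma lintegral_expPassage_comp_le_tsum {Ω : Type*} [MeasurableSpace Ω] {P : Measure Ω}
    {ξ : Ω → ℝ} {Y : Ω → ℕ → ℝ} (hξ : Measurable ξ) (hY : Measurable Y) (hξY : IndepFun ξ Y P)
    (hlaw : P.map Y = μ) {lam s₀ : ℝ} (hlam : 0 ≤ lam) (hs₀ : 0 < s₀) :
    ∫⁻ ω, expPassage lam walk (ξ ω) (Y ω) ∂P ≤
      ∑' n, P {ω | ⌊ξ ω / s₀⌋₊ = n} * ∫⁻ y, expPassage lam walk ((n + 1) * s₀) y ∂μ := by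
  have hfloor : Measurable fun x : ℝ => ⌊x / s₀⌋₊ :=
    Nat.measurable_floor.comp (measurable_id.div_const s₀)
  calc ∫⁻ ω, expPassage lam walk (ξ ω) (Y ω) ∂P
      ≤ ∫⁻ ω, expPassage lam walk ((⌊ξ ω / s₀⌋₊ + 1) * s₀) (Y ω) ∂P := lintegral_mono fun ω =>
        expPassage_mono_level hlam ((div_lt_iff₀ hs₀).1 (Nat.lt_floor_add_one _)).le
    _ = _ := by
        refine (lintegral_comp_eq_tsum_of_indepFun (N := fun ω => ⌊ξ ω / s₀⌋₊)
          (hfloor.comp hξ) hY (hξY.comp hfloor measurable_id)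
          (g := fun n y => expPassage lam walk ((n + 1) * s₀) y)
          fun n => measurable_expPassage_s8 _ _).trans (tsum_congr fun n => ?_)
        rw [← hlaw, lintegral_map (measurable_expPassage_s8 _ _) hY]
        rfl

end Moments

section StrongMarkov

open Measure

variable (ν : Measure ℝ) [IsProbabilityMeasure ν]

abbrev coordSigma (S : Set ℕ) : MeasurableSpace (ℕ → ℝ) :=
  ⨆ i ∈ S, MeasurableSpace.comap (fun y : ℕ → ℝ => y i) inferInstance

lemma coordSigma_le (S : Set ℕ) : coordSigma S ≤ MeasurableSpace.pi :=
  iSup₂_le fun i _ => (measurable_pi_apply i).comap_le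

lemma measurable_coordSigma {S : Set ℕ} {i : ℕ} (hi : i ∈ S) :
    Measurable[coordSigma S] fun y : ℕ → ℝ => y i :=
  (comap_measurable _).mono (le_iSup₂ (f := fun i (_ : i ∈ S) =>
    MeasurableSpace.comap (fun y : ℕ → ℝ => y i) inferInstance) i hi) le_rfl

lemma measurable_walk_coordSigma {n t : ℕ} (hn : n ≤ t) :
    Measurable[coordSigma (Set.Iio t)] (walk n) :=
  Finset.measurable_sum _ fun _ hi =>
    measurable_coordSigma (Set.mem_Iio.2 ((Finset.mem_range.1 hi).trans_le hn))

lemma measurePreserving_shift (t : ℕ) :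
    MeasurePreserving (shift t) (infinitePi fun _ => ν) (infinitePi fun _ => ν) :=
  ⟨measurable_pi_lambda _ fun i => measurable_pi_apply (t + i),
    map_infinitePi_infinitePi_of_inj (add_right_injective t)⟩

lemma indep_coordSigma_comap_shift (t : ℕ) :
    Indep (coordSigma (Set.Iio t)) (MeasurableSpace.comap (shift t) inferInstance)
      (infinitePi fun _ => ν) := by
  have hcoord : iIndep (fun i => MeasurableSpace.comap (fun y : ℕ → ℝ => y i) inferInstance)
      (infinitePi fun _ => ν) :=
    (iIndepFun_iff_iIndep _ _ _).1 (iIndepFun_infinitePi (X := fun _ x => x) fun _ => measurable_id)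
  refine indep_of_indep_of_le_right (indep_iSup_of_disjoint
    (fun i => (measurable_pi_apply i).comap_le) hcoord (Set.Iio_disjoint_Ici le_rfl)) ?_
  exact Measurable.comap_le (@measurable_pi_lambda _ _ _ (coordSigma (Set.Ici t)) _ _ fun i =>
    measurable_coordSigma (Set.mem_Ici.2 (Nat.le_add_right t i)))

lemma lintegral_mul_comp_shift {t : ℕ} {f F : (ℕ → ℝ) → ℝ≥0∞}
    (hf : Measurable[coordSigma (Set.Iio t)] f) (hF : Measurable F) :
    ∫⁻ y, f y * F (shift t y) ∂infinitePi (fun _ => ν) =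
      (∫⁻ y, f y ∂infinitePi (fun _ => ν)) * ∫⁻ y, F y ∂infinitePi (fun _ => ν) := by
  have hshift := measurePreserving_shift ν t
  rw [← hshift.lintegral_comp hF]
  exact lintegral_mul_eq_lintegral_mul_lintegral_of_independent_measurableSpace (coordSigma_le _)
    hshift.measurable.comap_le (indep_coordSigma_comap_shift ν t) hf
    (hF.comp (comap_measurable (shift t)))

variable {ν}

/- Split according to the value `t` of the hitting time: the event `{hitTime s = t}` is determined
by the first `t` increments, while the shifted path is independent of them and again has law
`infinitePi ν`. -/
theorem lintegral_expPassage_mul_comp_shift_hitTime {lam s : ℝ}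
    (hs : ∀ᵐ y ∂infinitePi (fun _ => ν), Hits s y) {G : (ℕ → ℝ) → ℝ≥0∞} (hG : Measurable G) :
    ∫⁻ y, expPassage lam walk s y * G (shift (hitTime s y) y) ∂infinitePi (fun _ => ν) =
      (∫⁻ y, expPassage lam walk s y ∂infinitePi (fun _ => ν)) *
        ∫⁻ y, G y ∂infinitePi (fun _ => ν) := by
  set D : ℕ → Set (ℕ → ℝ) := fun t => {y | Hits s y ∧ hitTime s y = t}
  have hD : ∀ t, MeasurableSet[coordSigma (Set.Iio t)] (D t) := fun t =>
    measurableSet_hits_and_hitTime_eq fun _ hn => measurable_walk_coordSigma hn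
  have hfib : ∀ᵐ y ∂infinitePi (fun _ => ν), Hits s y ∧ ∀ t, y ∈ D t ↔ hitTime s y = t :=
    hs.mono fun y hy => ⟨hy, fun _ => and_iff_right hy⟩
  set c : ℕ → ℝ≥0∞ := fun t => ENNReal.ofReal (Real.exp (lam * t))
  have hf : ∀ t, Measurable[coordSigma (Set.Iio t)] fun y => (D t).indicator 1 y * c t :=
    fun t => (measurable_const.indicator (hD t)).mul_const _
  calc ∫⁻ y, expPassage lam walk s y * G (shift (hitTime s y) y) ∂infinitePi (fun _ => ν)
      = ∫⁻ y, ∑' t, (D t).indicator 1 y * c t * G (shift t y) ∂infinitePi (fun _ => ν) := by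
        refine lintegral_congr_ae (hfib.mono fun y ⟨hy, hyD⟩ => ?_)
        simp_rw [mul_assoc]
        rw [tsum_indicator_one_mul hyD, expPassage_of_hits hy]
    _ = ∑' t, (∫⁻ y, (D t).indicator 1 y * c t ∂infinitePi (fun _ => ν)) *
          ∫⁻ y, G y ∂infinitePi (fun _ => ν) :=
        (lintegral_tsum fun t => (((hf t).mono (coordSigma_le _) le_rfl).mul
          (hG.comp (measurePreserving_shift ν t).measurable)).aemeasurable).trans
          (tsum_congr fun t => lintegral_mul_comp_shift ν (hf t) hG)
    _ = (∫⁻ y, expPassage lam walk s y ∂infinitePi (fun _ => ν)) *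
          ∫⁻ y, G y ∂infinitePi (fun _ => ν) := by
        rw [ENNReal.tsum_mul_right, ← lintegral_tsum fun t =>
          ((hf t).mono (coordSigma_le _) le_rfl).aemeasurable]
        refine congrArg (· * _) (lintegral_congr_ae (hfib.mono fun y ⟨hy, hyD⟩ => ?_))
        exact (tsum_indicator_one_mul hyD c).trans (expPassage_of_hits hy).symm

theorem lintegral_expPassage_add_le_s8 {lam : ℝ} (hlam : 0 ≤ lam) (s s' : ℝ) :
    ∫⁻ y, expPassage lam walk (s + s') y ∂infinitePi (fun _ => ν) ≤
      (∫⁻ y, expPassage lam walk s y ∂infinitePi (fun _ => ν)) *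
        ∫⁻ y, expPassage lam walk s' y ∂infinitePi (fun _ => ν) := by
  rcases eq_top_or_lt_top (∫⁻ y, expPassage lam walk s y ∂infinitePi (fun _ => ν)) with h | h
  · rw [h, ENNReal.top_mul (zero_lt_one.trans_le (one_le_lintegral_expPassage_s8 hlam s')).ne']
    exact le_top
  · calc _ ≤ ∫⁻ y, expPassage lam walk s y * expPassage lam walk s' (shift (hitTime s y) y)
            ∂infinitePi (fun _ => ν) := lintegral_mono fun y => expPassage_add_le hlam s s' y
      _ = _ := lintegral_expPassage_mul_comp_shift_hitTime
          (ae_hits_of_lintegral_expPassage_lt_top h) (measurable_expPassage_s8 lam s')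

theorem lintegral_expPassage_nat_mul_le {lam : ℝ} (hlam : 0 ≤ lam) (s : ℝ) (n : ℕ) :
    ∫⁻ y, expPassage lam walk ((n + 1) * s) y ∂infinitePi (fun _ => ν) ≤
      (∫⁻ y, expPassage lam walk s y ∂infinitePi (fun _ => ν)) ^ (n + 1) := by
  induction n with
  | zero => simp
  | succ n ih =>
    calc _ = ∫⁻ y, expPassage lam walk (s + (n + 1) * s) y ∂infinitePi (fun _ => ν) := by
          push_cast
          ring_nf
      _ ≤ _ := lintegral_expPassage_add_le_s8 hlam _ _
      _ ≤ _ := by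
          rw [pow_succ' _ (n + 1)]
          gcongr

end StrongMarkov

end RandomWalk

open RandomWalk in
theorem first_passage_time_exp_moment_random_start_general
    {Ω : Type*} [MeasurableSpace Ω] (P : Measure Ω) [IsProbabilityMeasure P]
    (X : ℕ → Ω → ℝ) (hmeas : ∀ i, Measurable (X i))
    (hindep : iIndepFun X P)
    (hident : ∀ i j : ℕ, Measure.map (X i) P = Measure.map (X j) P)
    (s₀ : ℝ) (hs₀ : 0 < s₀) (lambar : ℝ) (hlambar : 0 < lambar)
    (hmom : ∫⁻ ω, expPassage lambar
        (fun n ω => ∑ i ∈ Finset.range n, X (i + 1) ω) s₀ ω ∂P < ⊤)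
    (ξ : Ω → ℝ) (hξmeas : Measurable ξ)
    (hξindep : IndepFun ξ (fun ω => fun i => X i ω) P)
    (c₀ c₁ : ℝ) (hc₁ : c₁ ∈ Set.Ioo (0:ℝ) 1)
    (htail : ∀ t : ℝ, 0 ≤ t → P {ω | t < ξ ω} ≤ ENNReal.ofReal (c₀ * c₁ ^ t)) :
    ∃ lam' : ℝ, 0 < lam' ∧
      ∫⁻ ω, expPassage lam'
        (fun n ω => ∑ i ∈ Finset.range n, X (i + 1) ω) (ξ ω) ω ∂P < ⊤ := by
  set Y : Ω → ℕ → ℝ := fun ω i => X (i + 1) ω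
  have hY : Measurable Y := measurable_pi_lambda _ fun i => hmeas (i + 1)
  have := Measure.isProbabilityMeasure_map (μ := P) (hmeas 1).aemeasurable
  set μ := Measure.infinitePi fun _ : ℕ => P.map (X 1)
  have hlaw : P.map Y = μ := map_increments_eq_infinitePi hmeas hindep hident
  have hmom' : ∫⁻ y, expPassage lambar walk s₀ y ∂μ < ⊤ := by
    rwa [← hlaw, lintegral_map (measurable_expPassage_s8 _ _) hY]
  set β := ENNReal.ofReal (c₁ ^ s₀)
  have hβ : β < 1 := ENNReal.ofReal_lt_one.2 (Real.rpow_lt_one hc₁.1.le hc₁.2 hs₀)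
  obtain ⟨lam, hlam, hρ⟩ := exists_pos_lintegral_expPassage_lt hlambar hmom' (a := 1 / β)
    (by rwa [one_div, ENNReal.one_lt_inv])
  refine ⟨lam, hlam, ?_⟩
  set ρ := ∫⁻ y, expPassage lam walk s₀ y ∂μ
  have hξY : IndepFun ξ Y P :=
    hξindep.comp measurable_id (measurable_pi_lambda _ fun i => measurable_pi_apply (i + 1))
  calc ∫⁻ ω, expPassage lam walk (ξ ω) (Y ω) ∂P
      ≤ ∑' n, P {ω | ⌊ξ ω / s₀⌋₊ = n} * ∫⁻ y, expPassage lam walk ((n + 1) * s₀) y ∂μ :=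
        lintegral_expPassage_comp_le_tsum hξmeas hY hξY hlaw hlam.le hs₀
    _ ≤ ∑' n, ρ * (P {ω | ⌊ξ ω / s₀⌋₊ = n} * ρ ^ n) := ENNReal.tsum_le_tsum fun n => by
        rw [mul_left_comm, ← pow_succ']
        gcongr
        exact lintegral_expPassage_nat_mul_le hlam.le s₀ n
    _ < ⊤ := by
        rw [ENNReal.tsum_mul_left]
        exact ENNReal.mul_lt_top (hρ.trans_le le_top) (ENNReal.tsum_mul_pow_lt_top
          (measure_floor_div_eq_le hs₀ hc₁.1 htail) ENNReal.ofReal_ne_top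
          (ENNReal.mul_lt_of_lt_div' hρ))

/-- Exponential moments of first passage times propagate from a fixed starting level
to any independent random starting level with exponentially decaying tails: if
`E[e^{λ̄ T(s₀)}] < ∞` for some `s₀ > 0`, `λ̄ > 0`, and `ξ ≥ 0` is independent of the
increments with `P(ξ > t) ≤ c₀ c₁ᵗ`, then `E[e^{λ' T(ξ)}] < ∞` for some `λ' > 0`. -/
theorem first_passage_time_exp_moment_random_start
    {Ω : Type*} [MeasurableSpace Ω] (P : Measure Ω) [IsProbabilityMeasure P]
    (X : ℕ → Ω → ℝ) (hmeas : ∀ i, Measurable (X i))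
    (hindep : iIndepFun X P)
    (hident : ∀ i j : ℕ, Measure.map (X i) P = Measure.map (X j) P)
    (s₀ : ℝ) (hs₀ : 0 < s₀) (lambar : ℝ) (hlambar : 0 < lambar)
    (hmom : ∫⁻ ω, expPassage lambar
        (fun n ω => ∑ i ∈ Finset.range n, X (i + 1) ω) s₀ ω ∂P < ⊤)
    (ξ : Ω → ℝ) (hξmeas : Measurable ξ) (hξnonneg : ∀ ω, 0 ≤ ξ ω)
    (hξindep : IndepFun ξ (fun ω => fun i => X i ω) P)
    (c₀ c₁ : ℝ) (hc₀ : 0 < c₀) (hc₁ : c₁ ∈ Set.Ioo (0:ℝ) 1)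
    (htail : ∀ t : ℝ, 0 ≤ t → P {ω | t < ξ ω} ≤ ENNReal.ofReal (c₀ * c₁ ^ t)) :
    ∃ lam' : ℝ, 0 < lam' ∧
      ∫⁻ ω, expPassage lam'
        (fun n ω => ∑ i ∈ Finset.range n, X (i + 1) ω) (ξ ω) ω ∂P < ⊤ :=
  first_passage_time_exp_moment_random_start_general P X hmeas hindep hident s₀ hs₀ lambar hlambar
    hmom ξ hξmeas hξindep c₀ c₁ hc₁ htail
end

section
/- Let (L_i)_{i ≥ 1} be i.i.d. nonnegative random variables with E[e^{λ₀ L_1}] < ∞ for some λ₀ > 0, and let T be an ℕ-valued random variable on the same probability space (not assumed independent of (L_i)) satisfying P(T ≥ n) ≤ c₀ c₁^n for all n ≥ 0, for constants c₀ > 0 and c₁ ∈ (0,1). Then there exists λ > 0 such that E[ exp( λ ∑_{i=1}^{T} L_i ) ] < ∞. -/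
/-! Split `E[exp(λ S_T)]`, `S_n = ∑_{i<n} L_i`, according to the value of `T`. By Cauchy–Schwarz
the piece on `{T = n}` is at most `E[exp(2λ S_n)]^{1/2} P(T = n)^{1/2} ≤ (m(2λ)^n c₀ c₁^n)^{1/2}`,
where `m` is the exponential moment of `L₀` and independence gives `E[exp(2λ S_n)] = m(2λ)^n`.
Convexity of `exp` gives `m(θλ₀) ≤ 1 - θ + θ m(λ₀) → 1` as `θ → 0⁺`, so `λ` can be chosen with
`m(2λ) c₁ < 1`, and the resulting series is geometric. -/

open MeasureTheory ProbabilityTheory Filter Topology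
open scoped ENNReal

theorem ENNReal.tsum_rpow_mul_pow_lt_top {a r : ℝ≥0∞} {s : ℝ} (ha : a ≠ ⊤) (hr : r < 1)
    (hs : 0 < s) : ∑' n : ℕ, (a * r ^ n) ^ s < ⊤ := by
  have hterm : ∀ n : ℕ, (a * r ^ n) ^ s = a ^ s * (r ^ s) ^ n := fun n => by
    rw [ENNReal.mul_rpow_of_nonneg _ _ hs.le, ← ENNReal.rpow_natCast, ← ENNReal.rpow_mul,
      mul_comm (n : ℝ), ENNReal.rpow_mul, ENNReal.rpow_natCast]
  simp_rw [hterm, ENNReal.tsum_mul_left, ENNReal.tsum_geometric]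
  exact ENNReal.mul_lt_top (ENNReal.rpow_lt_top_of_nonneg hs.le ha)
    (ENNReal.inv_lt_top.2 (tsub_pos_of_lt (ENNReal.rpow_lt_one hr hs)))

section

variable {Ω : Type*} [MeasurableSpace Ω] {μ : Measure Ω}

theorem lintegral_comp_eq_tsum_setLIntegral {ι : Type*} [Countable ι] [MeasurableSpace ι]
    [MeasurableSingletonClass ι] {T : Ω → ι} (hT : Measurable T) (F : ι → Ω → ℝ≥0∞) :
    ∫⁻ ω, F (T ω) ω ∂μ = ∑' n, ∫⁻ ω in {ω | T ω = n}, F n ω ∂μ := by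
  have hcover : (⋃ n, {ω | T ω = n}) = Set.univ :=
    Set.eq_univ_of_forall fun ω => Set.mem_iUnion.2 ⟨T ω, rfl⟩
  rw [← setLIntegral_univ, ← hcover,
    lintegral_iUnion (s := fun n => {ω | T ω = n}) (fun n => hT (measurableSet_singleton n))
      (fun m n hmn => Set.disjoint_left.2 fun ω hm hn => hmn (hm.symm.trans hn))]
  exact tsum_congr fun n => setLIntegral_congr_fun (hT (measurableSet_singleton n))
    fun ω hω => by rw [hω]

theorem setLIntegral_le_lintegral_rpow_mul_measure_rpow {p q : ℝ} (hpq : p.HolderConjugate q)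
    {f : Ω → ℝ≥0∞} (hf : AEMeasurable f μ) (s : Set Ω) :
    ∫⁻ ω in s, f ω ∂μ ≤ (∫⁻ ω, f ω ^ p ∂μ) ^ (1 / p) * μ s ^ (1 / q) := by
  calc ∫⁻ ω in s, f ω ∂μ = ∫⁻ ω in s, (f * 1) ω ∂μ := by simp
    _ ≤ (∫⁻ ω in s, f ω ^ p ∂μ) ^ (1 / p) * (∫⁻ ω in s, (1 : Ω → ℝ≥0∞) ω ^ q ∂μ) ^ (1 / q) :=
      ENNReal.lintegral_mul_le_Lp_mul_Lq _ hpq hf.restrict aemeasurable_const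
    _ ≤ (∫⁻ ω, f ω ^ p ∂μ) ^ (1 / p) * μ s ^ (1 / q) := by
      simp only [Pi.one_apply, ENNReal.one_rpow, lintegral_const, Measure.restrict_apply_univ,
        one_mul]
      gcongr
      · exact hpq.one_div_nonneg
      · exact Measure.restrict_le_self

theorem lintegral_exp_mul_le [IsProbabilityMeasure μ] {Y : Ω → ℝ} (hY : Measurable Y)
    {θ : ℝ} (hθ₀ : 0 ≤ θ) (hθ₁ : θ ≤ 1) :
    ∫⁻ ω, ENNReal.ofReal (Real.exp (θ * Y ω)) ∂μ
      ≤ ENNReal.ofReal (1 - θ) + ENNReal.ofReal θ * ∫⁻ ω, ENNReal.ofReal (Real.exp (Y ω)) ∂μ := by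
  have hconv : ∀ y, Real.exp (θ * y) ≤ (1 - θ) + θ * Real.exp y := fun y => by
    simpa using convexOn_exp.2 (Set.mem_univ 0) (Set.mem_univ y) (sub_nonneg.2 hθ₁) hθ₀
      (by ring)
  calc ∫⁻ ω, ENNReal.ofReal (Real.exp (θ * Y ω)) ∂μ
      ≤ ∫⁻ ω, (ENNReal.ofReal (1 - θ) + ENNReal.ofReal θ * ENNReal.ofReal (Real.exp (Y ω))) ∂μ :=
        lintegral_mono fun ω => by
          rw [← ENNReal.ofReal_mul hθ₀, ← ENNReal.ofReal_add (sub_nonneg.2 hθ₁) (by positivity)]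
          exact ENNReal.ofReal_le_ofReal (hconv (Y ω))
    _ = _ := by
      rw [lintegral_add_left measurable_const, lintegral_const_mul _ hY.exp.ennreal_ofReal]
      simp

theorem exists_pos_lintegral_exp_mul_lt [IsProbabilityMeasure μ] {Y : Ω → ℝ} (hY : Measurable Y)
    (hmom : ∫⁻ ω, ENNReal.ofReal (Real.exp (Y ω)) ∂μ ≠ ⊤) {r : ℝ≥0∞} (hr : 1 < r) :
    ∃ θ > 0, ∫⁻ ω, ENNReal.ofReal (Real.exp (θ * Y ω)) ∂μ < r := by
  set M := ∫⁻ ω, ENNReal.ofReal (Real.exp (Y ω)) ∂μ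
  have hbound : Tendsto (fun θ : ℝ => ENNReal.ofReal (1 - θ) + ENNReal.ofReal θ * M)
      (𝓝[>] 0) (𝓝 1) := by
    have hcont : Continuous fun θ : ℝ => ENNReal.ofReal (1 - θ) + ENNReal.ofReal θ * M :=
      (ENNReal.continuous_ofReal.comp (continuous_const.sub continuous_id)).add
        (ENNReal.continuous_mul_const hmom |>.comp ENNReal.continuous_ofReal)
    simpa using (hcont.tendsto 0).mono_left nhdsWithin_le_nhds
  obtain ⟨θ, hθr, hθ₀, hθ₁⟩ :=
    ((hbound.eventually (gt_mem_nhds hr)).and (Ioc_mem_nhdsGT one_pos)).exists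
  exact ⟨θ, hθ₀, (lintegral_exp_mul_le hY hθ₀.le hθ₁).trans_lt hθr⟩

theorem lintegral_exp_mul_sum_range_eq_pow {L : ℕ → Ω → ℝ} (hmeas : ∀ i, Measurable (L i))
    (hindep : iIndepFun L μ) (hident : ∀ i, IdentDistrib (L i) (L 0) μ μ) (c : ℝ) (n : ℕ) :
    ∫⁻ ω, ENNReal.ofReal (Real.exp (c * ∑ i ∈ Finset.range n, L i ω)) ∂μ
      = (∫⁻ ω, ENNReal.ofReal (Real.exp (c * L 0 ω)) ∂μ) ^ n := by
  have hφ : Measurable fun x : ℝ => ENNReal.ofReal (Real.exp (c * x)) := by fun_prop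
  calc ∫⁻ ω, ENNReal.ofReal (Real.exp (c * ∑ i ∈ Finset.range n, L i ω)) ∂μ
      = ∫⁻ ω, ∏ i ∈ Finset.range n, ENNReal.ofReal (Real.exp (c * L i ω)) ∂μ := by
        simp_rw [Finset.mul_sum, Real.exp_sum,
          ENNReal.ofReal_prod_of_nonneg fun i _ => (Real.exp_pos _).le]
    _ = ∏ i ∈ Finset.range n, ∫⁻ ω, ENNReal.ofReal (Real.exp (c * L i ω)) ∂μ :=
        lintegral_prod_eq_prod_lintegral_of_indepFun _ _ (hindep.comp _ fun _ => hφ)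
          fun i => hφ.comp (hmeas i)
    _ = ∏ i ∈ Finset.range n, ∫⁻ ω, ENNReal.ofReal (Real.exp (c * L 0 ω)) ∂μ :=
        Finset.prod_congr rfl fun i _ => ((hident i).comp hφ).lintegral_eq
    _ = _ := by rw [Finset.prod_const, Finset.card_range]

theorem lintegral_exp_mul_sum_range_comp_lt_top {L : ℕ → Ω → ℝ} (hmeas : ∀ i, Measurable (L i))
    (hindep : iIndepFun L μ)
    (hident : ∀ i, IdentDistrib (L i) (L 0) μ μ) {T : Ω → ℕ} (hT : Measurable T)
    {a r : ℝ≥0∞} (ha : a ≠ ⊤) (htail : ∀ n, μ {ω | T ω = n} ≤ a * r ^ n) {c : ℝ}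
    (hc : (∫⁻ ω, ENNReal.ofReal (Real.exp (2 * c * L 0 ω)) ∂μ) * r < 1) :
    ∫⁻ ω, ENNReal.ofReal (Real.exp (c * ∑ i ∈ Finset.range (T ω), L i ω)) ∂μ < ⊤ := by
  set m := ∫⁻ ω, ENNReal.ofReal (Real.exp (2 * c * L 0 ω)) ∂μ
  have hsq : ∀ x, ENNReal.ofReal (Real.exp (c * x)) ^ (2 : ℝ)
      = ENNReal.ofReal (Real.exp (2 * c * x)) := fun x => by
    rw [ENNReal.ofReal_rpow_of_nonneg (Real.exp_nonneg _) zero_le_two, ← Real.exp_mul]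
    ring_nf
  have hterm : ∀ n, ∫⁻ ω in {ω | T ω = n},
      ENNReal.ofReal (Real.exp (c * ∑ i ∈ Finset.range n, L i ω)) ∂μ
        ≤ (a * (m * r) ^ n) ^ (1 / 2 : ℝ) := fun n =>
    calc _ ≤ (∫⁻ ω, ENNReal.ofReal (Real.exp (c * ∑ i ∈ Finset.range n, L i ω)) ^ (2 : ℝ) ∂μ)
          ^ (1 / 2 : ℝ) * μ {ω | T ω = n} ^ (1 / 2 : ℝ) :=
        setLIntegral_le_lintegral_rpow_mul_measure_rpow Real.HolderConjugate.two_two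
          (by fun_prop) _
      _ ≤ (m ^ n) ^ (1 / 2 : ℝ) * (a * r ^ n) ^ (1 / 2 : ℝ) := by
        simp_rw [hsq, lintegral_exp_mul_sum_range_eq_pow hmeas hindep hident]
        gcongr
        exact htail n
      _ = _ := by rw [← ENNReal.mul_rpow_of_nonneg _ _ (by norm_num), mul_pow]; ring_nf
  calc _ = ∑' n, ∫⁻ ω in {ω | T ω = n},
        ENNReal.ofReal (Real.exp (c * ∑ i ∈ Finset.range n, L i ω)) ∂μ :=
      lintegral_comp_eq_tsum_setLIntegral hT
        fun n ω => ENNReal.ofReal (Real.exp (c * ∑ i ∈ Finset.range n, L i ω))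
    _ ≤ _ := ENNReal.tsum_le_tsum hterm
    _ < ⊤ := ENNReal.tsum_rpow_mul_pow_lt_top ha hc (by norm_num)

end

theorem exp_moment_of_random_sum_general
    {Ω : Type*} [MeasurableSpace Ω] (P : Measure Ω) [IsProbabilityMeasure P]
    (L : ℕ → Ω → ℝ) (hmeas : ∀ i, Measurable (L i))
    (hindep : iIndepFun L P)
    (hident : ∀ i j : ℕ, Measure.map (L i) P = Measure.map (L j) P)
    (lam₀ : ℝ) (hlam₀ : 0 < lam₀)
    (hmom : ∫⁻ ω, ENNReal.ofReal (Real.exp (lam₀ * L 0 ω)) ∂P < ⊤)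
    (T : Ω → ℕ) (hT : Measurable T)
    (c₀ c₁ : ℝ) (hc₁ : c₁ ∈ Set.Ioo (0:ℝ) 1)
    (htail : ∀ n : ℕ, P {ω | n ≤ T ω} ≤ ENNReal.ofReal (c₀ * c₁ ^ n)) :
    ∃ lam : ℝ, 0 < lam ∧
      ∫⁻ ω, ENNReal.ofReal
        (Real.exp (lam * ∑ i ∈ Finset.range (T ω), L i ω)) ∂P < ⊤ := by
  obtain ⟨hc₁0, hc₁1⟩ := hc₁
  obtain ⟨θ, hθ, hm⟩ := exists_pos_lintegral_exp_mul_lt ((hmeas 0).const_mul lam₀) hmom.ne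
    (ENNReal.one_lt_inv.2 (ENNReal.ofReal_lt_one.2 hc₁1))
  have hpoint : ∀ n, P {ω | T ω = n} ≤ ENNReal.ofReal c₀ * ENNReal.ofReal c₁ ^ n := fun n => by
    rw [← ENNReal.ofReal_pow hc₁0.le, ← ENNReal.ofReal_mul' (by positivity)]
    exact (measure_mono fun ω (h : T ω = n) => h.ge).trans (htail n)
  refine ⟨θ * lam₀ / 2, by positivity,
    lintegral_exp_mul_sum_range_comp_lt_top hmeas hindep
      (fun i => ⟨(hmeas i).aemeasurable, (hmeas 0).aemeasurable, hident i 0⟩) hT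
      ENNReal.ofReal_ne_top hpoint (ENNReal.mul_lt_of_lt_div ?_)⟩
  convert hm using 5 with ω
  · ring
  · rw [one_div]

/-- If `(L_i)` are i.i.d. nonnegative random variables with a finite exponential
moment `E[e^{λ₀ L₁}] < ∞`, and `T` is an `ℕ`-valued random variable (not assumed
independent of the `L_i`) with exponentially decaying tails `P(T ≥ n) ≤ c₀ c₁ⁿ`,
then `E[exp(λ ∑_{i=1}^{T} L_i)] < ∞` for some `λ > 0`. -/
theorem exp_moment_of_random_sum
    {Ω : Type*} [MeasurableSpace Ω] (P : Measure Ω) [IsProbabilityMeasure P]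
    (L : ℕ → Ω → ℝ) (hmeas : ∀ i, Measurable (L i))
    (hnonneg : ∀ i ω, 0 ≤ L i ω)
    (hindep : iIndepFun L P)
    (hident : ∀ i j : ℕ, Measure.map (L i) P = Measure.map (L j) P)
    (lam₀ : ℝ) (hlam₀ : 0 < lam₀)
    (hmom : ∫⁻ ω, ENNReal.ofReal (Real.exp (lam₀ * L 0 ω)) ∂P < ⊤)
    (T : Ω → ℕ) (hT : Measurable T)
    (c₀ c₁ : ℝ) (hc₀ : 0 < c₀) (hc₁ : c₁ ∈ Set.Ioo (0:ℝ) 1)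
    (htail : ∀ n : ℕ, P {ω | n ≤ T ω} ≤ ENNReal.ofReal (c₀ * c₁ ^ n)) :
    ∃ lam : ℝ, 0 < lam ∧
      ∫⁻ ω, ENNReal.ofReal
        (Real.exp (lam * ∑ i ∈ Finset.range (T ω), L i ω)) ∂P < ⊤ :=
  exp_moment_of_random_sum_general P L hmeas hindep hident lam₀ hlam₀ hmom T hT c₀ c₁ hc₁ htail
end
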